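/- arXiv:2211.03257 — 10 statements merged into one kernel-verified Lean document; each statement's English description precedes it below -/
import Mathlib

section
/- Let L be a lattice in which every nonempty upper bounded subset has a join, equipped with an order-preserving action of ℤ (written x + n) such that x < x + 1 for all x, and such that for all x, y in L there exists k ∈ ℕ with x - k ≤ y ≤ x + k. Define a graph X on the quotient L/ℤ with an edge between x, y when some representatives satisfy x₀ ≤ y₀ ≤ x₀ + 1. Then for any vertices x, y ∈ X and any representatives x₀, y₀ ∈ L, the graph distance satisfies d(x, y) = min{n ≥ 0 | ∃ k, h ∈ ℤ, x₀ + k ≤ y₀ + h ≤ x₀ + k + n}. -/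
/-!
A walk of length `n` between the classes of `x` and `y` lifts, edge by edge, to translates
with `x + k ≤ y + h ≤ x + k + n`, so `d(x, y)` is at least the minimum. Conversely, from
`a ≤ b ≤ a + n` the meet `c = b ⊓ (a + 1)` is one step away from `a` and still satisfies
`c ≤ b ≤ c + (n - 1)`, because translation preserves meets; induction on `n` gives a walk of
length at most `n`. Both sides are `0` when no walk exists.
-/

open SimpleGraph

/-- The orbit relation of the `ℤ`-action on `L` generated by the order
automorphism `T` (the action of `n` is `T ^ n`, written `x + n` in the paper). -/
def zOrbitRel {L : Type*} [Lattice L] (T : L ≃o L) (x y : L) : Prop :=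
  ∃ k : ℤ, (T ^ k) x = y

/-- The graph `X` on the quotient `L/ℤ`, with an edge between two distinct classes `x, y`
whenever some representatives satisfy `x₀ ≤ y₀ ≤ x₀ + 1`. -/
def quotGraph {L : Type*} [Lattice L] (T : L ≃o L) : SimpleGraph (Quot (zOrbitRel T)) where
  Adj x y := x ≠ y ∧ ∃ x₀ y₀ : L, Quot.mk _ x₀ = x ∧ Quot.mk _ y₀ = y ∧
    x₀ ≤ y₀ ∧ y₀ ≤ T x₀
  symm := by
    constructor
    rintro x y ⟨hne, x₀, y₀, hx, hy, h1, h2⟩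
    refine ⟨hne.symm, y₀, T x₀, hy, ?_, h2, T.monotone h1⟩
    rw [← hx]
    exact (Quot.sound ⟨(1 : ℤ), by simp⟩).symm
  loopless := by constructor; rintro x ⟨hne, -⟩; exact hne rfl

theorem Nat.sInf_eq_of_subset_of_forall_exists_le {A B : Set ℕ} (hAB : A ⊆ B)
    (hBA : ∀ b ∈ B, ∃ a ∈ A, a ≤ b) : sInf A = sInf B := by
  rcases B.eq_empty_or_nonempty with rfl | hB
  · rw [Set.subset_empty_iff.1 hAB]
  obtain ⟨a, ha, hab⟩ := hBA _ (Nat.sInf_mem hB)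
  exact le_antisymm ((Nat.sInf_le ha).trans hab)
    (csInf_le_csInf (OrderBot.bddBelow B) ⟨a, ha⟩ hAB)

namespace OrderIso

variable {α : Type*} [Preorder α] (T : α ≃o α)

theorem zpow_add_apply (a b : ℤ) (x : α) : (T ^ (a + b)) x = (T ^ a) ((T ^ b) x) := by
  rw [zpow_add]; rfl

theorem le_pow_apply_of_forall_le (hT : ∀ x, x ≤ T x) (n : ℕ) (x : α) : x ≤ (T ^ n) x := by
  induction n with
  | zero => rfl
  | succ n ih => exact ih.trans (pow_succ' T n ▸ hT _)

end OrderIso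

section QuotGraph

variable {L : Type*} [Lattice L] (T : L ≃o L)

theorem zOrbitRel_equivalence : Equivalence (zOrbitRel T) where
  refl _ := ⟨0, rfl⟩
  symm := by
    rintro x _ ⟨k, rfl⟩
    exact ⟨-k, by rw [← OrderIso.zpow_add_apply, neg_add_cancel, zpow_zero]; rfl⟩
  trans := by
    rintro x _ _ ⟨k, rfl⟩ ⟨l, rfl⟩
    exact ⟨l + k, OrderIso.zpow_add_apply T l k x⟩

theorem zOrbitRel_of_mk_eq {x y : L} (h : Quot.mk (zOrbitRel T) x = Quot.mk _ y) :
    zOrbitRel T x y :=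
  (zOrbitRel_equivalence T).eqvGen_iff.1 (Quot.eqvGen_exact h)

theorem quot_mk_zpow_apply (k : ℤ) (x : L) :
    Quot.mk (zOrbitRel T) ((T ^ k) x) = Quot.mk _ x :=
  (Quot.sound ⟨k, rfl⟩).symm

def TranslatesWithin (n : ℕ) (x y : L) : Prop :=
  ∃ k h : ℤ, (T ^ k) x ≤ (T ^ h) y ∧ (T ^ h) y ≤ (T ^ (k + n)) x

variable {T}

theorem translatesWithin_zero_of_zOrbitRel {x y : L} (hxy : zOrbitRel T x y) :
    TranslatesWithin T 0 x y := by
  obtain ⟨m, rfl⟩ := hxy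
  exact ⟨m, 0, by simp, by simp⟩

theorem TranslatesWithin.of_zOrbitRel_left {n : ℕ} {x x' y : L} (hx : zOrbitRel T x x')
    (h : TranslatesWithin T n x' y) : TranslatesWithin T n x y := by
  obtain ⟨m, rfl⟩ := hx
  obtain ⟨k, h, h₁, h₂⟩ := h
  refine ⟨k + m, h, ?_, ?_⟩
  · rwa [OrderIso.zpow_add_apply]
  · rwa [add_right_comm, OrderIso.zpow_add_apply]

theorem TranslatesWithin.succ_of_le_of_le {n : ℕ} {x x' y : L} (h₁ : x ≤ x') (h₂ : x' ≤ T x)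
    (h : TranslatesWithin T n x' y) : TranslatesWithin T (n + 1) x y := by
  obtain ⟨k, h, hk₁, hk₂⟩ := h
  refine ⟨k, h, ((T ^ k).monotone h₁).trans hk₁, hk₂.trans ?_⟩
  calc (T ^ (k + n)) x' ≤ (T ^ (k + n)) (T x) := (T ^ (k + n)).monotone h₂
    _ = (T ^ (k + (n + 1 : ℕ))) x := by
      rw [Nat.cast_succ, ← add_assoc, OrderIso.zpow_add_apply T (k + n) 1, zpow_one]

theorem translatesWithin_of_walk {u v : Quot (zOrbitRel T)} (p : (quotGraph T).Walk u v)
    {x y : L} (hx : Quot.mk _ x = u) (hy : Quot.mk _ y = v) :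
    TranslatesWithin T p.length x y := by
  induction p generalizing x with
  | nil => exact translatesWithin_zero_of_zOrbitRel (zOrbitRel_of_mk_eq T (hx.trans hy.symm))
  | cons hadj q ih =>
    obtain ⟨-, x₁, x₁', rfl, rfl, h₁, h₂⟩ := hadj
    exact ((ih rfl hy).succ_of_le_of_le h₁ h₂).of_zOrbitRel_left (zOrbitRel_of_mk_eq T hx)

theorem exists_walk_length_le_of_le_of_le_pow (hT : ∀ x, x ≤ T x) {n : ℕ} {a b : L}
    (hab : a ≤ b) (hba : b ≤ (T ^ n) a) :
    ∃ p : (quotGraph T).Walk (Quot.mk _ a) (Quot.mk _ b), p.length ≤ n := by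
  induction n generalizing a with
  | zero =>
    obtain rfl : a = b := le_antisymm hab hba
    exact ⟨.nil, le_rfl⟩
  | succ n ih =>
    set c := b ⊓ T a
    have hbc : b ≤ (T ^ n) c := by
      rw [map_inf, ← RelIso.mul_apply, ← pow_succ]
      exact le_inf (OrderIso.le_pow_apply_of_forall_le T hT n b) hba
    obtain ⟨p, hp⟩ := ih inf_le_left hbc
    by_cases hac : Quot.mk (zOrbitRel T) a = Quot.mk _ c
    · exact hac ▸ ⟨p, hp.trans n.le_succ⟩
    · have hadj : (quotGraph T).Adj (Quot.mk _ a) (Quot.mk _ c) :=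
        ⟨hac, a, c, rfl, rfl, le_inf hab (hT a), inf_le_right⟩
      exact ⟨.cons hadj p, by simpa using hp⟩

theorem exists_walk_length_le_of_translatesWithin (hT : ∀ x, x ≤ T x) {n : ℕ} {x y : L}
    (h : TranslatesWithin T n x y) :
    ∃ p : (quotGraph T).Walk (Quot.mk _ x) (Quot.mk _ y), p.length ≤ n := by
  obtain ⟨k, h, h₁, h₂⟩ := h
  rw [add_comm, OrderIso.zpow_add_apply, zpow_natCast] at h₂
  rw [← quot_mk_zpow_apply T k x, ← quot_mk_zpow_apply T h y]
  exact exists_walk_length_le_of_le_of_le_pow hT h₁ h₂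

end QuotGraph

theorem quotGraph_dist_eq_general {L : Type*} [Lattice L] (T : L ≃o L)
    (hinc : ∀ x : L, x < T x)
    (x₀ y₀ : L) :
    (quotGraph T).dist (Quot.mk _ x₀) (Quot.mk _ y₀) =
      sInf {n : ℕ | ∃ k h : ℤ, (T ^ k) x₀ ≤ (T ^ h) y₀ ∧ (T ^ h) y₀ ≤ (T ^ (k + n)) x₀} := by
  rw [dist_eq_sInf]
  refine Nat.sInf_eq_of_subset_of_forall_exists_le ?_ fun n hn => ?_
  · rintro _ ⟨p, rfl⟩
    exact translatesWithin_of_walk p rfl rfl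
  · obtain ⟨p, hp⟩ := exists_walk_length_le_of_translatesWithin (fun x => (hinc x).le) hn
    exact ⟨p.length, ⟨p, rfl⟩, hp⟩

/-- Lemma 2.2. If `L` is a lattice in which every nonempty upper bounded
subset has a join, with an order-preserving `ℤ`-action `n • x = (T ^ n) x` such that
`x < x + 1` and cofinality holds, then in the quotient graph `X = L/ℤ`, for any vertices
with representatives `x₀, y₀` we have
`d(x, y) = min {n ≥ 0 | ∃ k h : ℤ, x₀ + k ≤ y₀ + h ≤ x₀ + k + n}`. -/
theorem quotGraph_dist_eq {L : Type*} [Lattice L] (T : L ≃o L)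
    (hjoin : ∀ S : Set L, S.Nonempty → BddAbove S → ∃ j, IsLUB S j)
    (hinc : ∀ x : L, x < T x)
    (hcof : ∀ x y : L, ∃ k : ℕ, (T ^ (k : ℤ))⁻¹ x ≤ y ∧ y ≤ (T ^ (k : ℤ)) x)
    (x₀ y₀ : L) :
    (quotGraph T).dist (Quot.mk _ x₀) (Quot.mk _ y₀) =
      sInf {n : ℕ | ∃ k h : ℤ, (T ^ k) x₀ ≤ (T ^ h) y₀ ∧ (T ^ h) y₀ ≤ (T ^ (k + n)) x₀} :=
  quotGraph_dist_eq_general T hinc x₀ y₀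
end

section
/- Let L be a lattice with a ℤ-action as above and X the quotient graph on L/ℤ. Then X is a weakly modular graph, i.e., it satisfies both the triangle condition and the quadrangle condition at every vertex and every distance n ≥ 2. -/
/-!
For `x, y ∈ L` let `a(x, y)` be the least `m ∈ ℤ` with `y ≤ x + m`. The number
`a(x, y) + a(y, x)` only depends on the classes of `x` and `y`, grows by at most one along an
edge, and is attained by a path: if `y ≤ x ≤ y + c`, then `x' = y ⊔ (x - 1)` satisfies
`x' ≤ x ≤ x' + 1` and `y ≤ x' ≤ y + (c - 1)`. So it is the distance in `X`.

Given two vertices at distance `n ≥ 1` from `x`, with representatives `p, q` such that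
`p ≤ q + 1`, `q ≤ p + 1` and `a(x, p) = a(x, q) = α`, the meet `u = p ⊓ q ⊓ (x + α - 1)` is a
common neighbour of `p` and `q` at distance `n - 1` from `x`. In both the triangle and the
quadrangle condition the two vertices have such representatives.
-/

open SimpleGraph

namespace OrderIso

variable {L : Type*}

lemma zpow_add_apply_s3 [LE L] (T : L ≃o L) (j k : ℤ) (x : L) :
    (T ^ (j + k)) x = (T ^ j) ((T ^ k) x) := by
  rw [zpow_add]; rfl

lemma zpow_add_one_apply [LE L] (T : L ≃o L) (k : ℤ) (x : L) :
    (T ^ (k + 1)) x = T ((T ^ k) x) := by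
  rw [add_comm, zpow_add_apply_s3, zpow_one]

lemma zpow_apply_apply_comm [LE L] (T : L ≃o L) (k : ℤ) (x : L) :
    (T ^ k) (T x) = T ((T ^ k) x) := by
  show (T ^ k * T) x = (T * T ^ k) x
  rw [← zpow_add_one, ← zpow_one_add, add_comm]

lemma zpow_apply_le_iff [LE L] (T : L ≃o L) (k : ℤ) (x y : L) :
    (T ^ k) x ≤ y ↔ x ≤ (T ^ (-k)) y := by
  rw [zpow_neg]; exact (T ^ k).le_symm_apply.symm

lemma strictMono_zpow_apply [Preorder L] {T : L ≃o L} (hinc : ∀ x, x < T x) (x : L) :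
    StrictMono fun k : ℤ => (T ^ k) x :=
  strictMono_int_of_lt_succ fun k => by
    simp only [zpow_add_one_apply]; exact hinc _

end OrderIso

section Preorder

variable {L : Type*} [Preorder L] {T : L ≃o L}

/-- The least `m` with `y ≤ x + m`; junk (`0`) unless the set is nonempty and bounded below. -/
noncomputable def orbitIndex (T : L ≃o L) (x y : L) : ℤ :=
  sInf {m : ℤ | y ≤ (T ^ m) x}

noncomputable def orbitDist (T : L ≃o L) (x y : L) : ℤ :=
  orbitIndex T x y + orbitIndex T y x

variable (hinc : ∀ x, x < T x) (hcof : ∀ x y : L, ∃ k : ℤ, y ≤ (T ^ k) x)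

include hinc hcof in
lemma orbitIndex_le_iff {x y : L} {m : ℤ} : orbitIndex T x y ≤ m ↔ y ≤ (T ^ m) x := by
  have hbdd : BddBelow {m : ℤ | y ≤ (T ^ m) x} := by
    obtain ⟨k, hk⟩ := hcof y x
    refine ⟨-k, fun m (hm : y ≤ (T ^ m) x) => ?_⟩
    have : (T ^ (0 : ℤ)) y ≤ (T ^ (m + k)) y := by
      rw [zpow_zero, OrderIso.zpow_add_apply_s3]; exact hm.trans ((T ^ m).monotone hk)
    have := (OrderIso.strictMono_zpow_apply hinc y).le_iff_le.mp this
    omega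
  refine ⟨fun h => ?_, fun h => csInf_le hbdd h⟩
  exact le_trans (Int.csInf_mem (hcof x y) hbdd)
    ((OrderIso.strictMono_zpow_apply hinc x).monotone h)

include hinc hcof in
lemma le_zpow_orbitIndex (x y : L) : y ≤ (T ^ orbitIndex T x y) x :=
  (orbitIndex_le_iff hinc hcof).1 le_rfl

include hinc hcof in
lemma orbitIndex_zpow_right (x y : L) (k : ℤ) :
    orbitIndex T x ((T ^ k) y) = orbitIndex T x y + k := by
  refine eq_of_forall_ge_iff fun c => ?_
  rw [orbitIndex_le_iff hinc hcof, OrderIso.zpow_apply_le_iff, ← OrderIso.zpow_add_apply_s3,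
    ← orbitIndex_le_iff hinc hcof]
  omega

include hinc hcof in
lemma orbitIndex_zpow_left (x y : L) (k : ℤ) :
    orbitIndex T ((T ^ k) x) y = orbitIndex T x y - k := by
  refine eq_of_forall_ge_iff fun c => ?_
  rw [orbitIndex_le_iff hinc hcof, ← OrderIso.zpow_add_apply_s3, ← orbitIndex_le_iff hinc hcof]
  omega

include hinc hcof in
lemma orbitIndex_apply_right (x y : L) : orbitIndex T x (T y) = orbitIndex T x y + 1 := by
  simpa using orbitIndex_zpow_right hinc hcof x y 1

include hinc hcof in
lemma orbitIndex_mono_right {x y y' : L} (h : y ≤ y') : orbitIndex T x y ≤ orbitIndex T x y' :=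
  (orbitIndex_le_iff hinc hcof).2 (h.trans (le_zpow_orbitIndex hinc hcof x y'))

include hinc hcof in
lemma orbitIndex_anti_left {x x' y : L} (h : x ≤ x') : orbitIndex T x' y ≤ orbitIndex T x y :=
  (orbitIndex_le_iff hinc hcof).2 ((le_zpow_orbitIndex hinc hcof x y).trans ((T ^ _).monotone h))

include hinc hcof in
lemma orbitIndex_self (x : L) : orbitIndex T x x = 0 := by
  refine le_antisymm ((orbitIndex_le_iff hinc hcof).2 (by simp)) ?_
  by_contra! h
  have := (orbitIndex_le_iff hinc hcof).1 (show orbitIndex T x x ≤ -1 by omega)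
  exact (OrderIso.strictMono_zpow_apply hinc x neg_one_lt_zero).not_ge (by simpa using this)

include hinc hcof in
lemma orbitIndex_le_add (x y z : L) :
    orbitIndex T x z ≤ orbitIndex T x y + orbitIndex T y z := by
  refine (orbitIndex_le_iff hinc hcof).2 ?_
  rw [add_comm, OrderIso.zpow_add_apply_s3]
  exact (le_zpow_orbitIndex hinc hcof y z).trans
    ((T ^ _).monotone (le_zpow_orbitIndex hinc hcof x y))

lemma orbitDist_comm (x y : L) : orbitDist T x y = orbitDist T y x :=
  add_comm _ _

include hinc hcof in
lemma orbitDist_zpow_right (x y : L) (k : ℤ) : orbitDist T x ((T ^ k) y) = orbitDist T x y := by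
  rw [orbitDist, orbitDist, orbitIndex_zpow_right hinc hcof, orbitIndex_zpow_left hinc hcof]
  ring

include hinc hcof in
lemma orbitDist_nonneg (x y : L) : 0 ≤ orbitDist T x y := by
  have := orbitIndex_le_add hinc hcof x y x
  rwa [orbitIndex_self hinc hcof] at this

include hinc hcof in
lemma orbitDist_le_add (x y z : L) : orbitDist T x z ≤ orbitDist T x y + orbitDist T y z := by
  have := orbitIndex_le_add hinc hcof x y z
  have := orbitIndex_le_add hinc hcof z y x
  unfold orbitDist
  omega

include hinc hcof in
lemma orbitDist_le_one {p r : L} (h₁ : p ≤ r) (h₂ : r ≤ T p) : orbitDist T p r ≤ 1 := by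
  have hpr : orbitIndex T p r ≤ 1 := (orbitIndex_le_iff hinc hcof).2 (by simpa using h₂)
  have hrp : orbitIndex T r p ≤ 0 := (orbitIndex_le_iff hinc hcof).2 (by simpa using h₁)
  unfold orbitDist
  omega

include hinc hcof in
lemma orbitIndex_eq_add_one_of_orbitDist_eq_add_one {x s t : L} (h₁ : s ≤ t) (h₂ : t ≤ T s)
    (hd : orbitDist T x t = orbitDist T x s + 1) :
    orbitIndex T x t = orbitIndex T x s + 1 := by
  have := (orbitIndex_mono_right hinc hcof (x := x) h₂).trans_eq
    (orbitIndex_apply_right hinc hcof x s)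
  have := orbitIndex_anti_left hinc hcof (y := x) h₁
  unfold orbitDist at hd
  omega

end Preorder

section SemilatticeInf

variable {L : Type*} [SemilatticeInf L] {T : L ≃o L}
  (hinc : ∀ x, x < T x) (hcof : ∀ x y : L, ∃ k : ℤ, y ≤ (T ^ k) x)

include hinc hcof in
lemma exists_inf_common_neighbor (x p q : L) (hpq : p ≤ T q) (hqp : q ≤ T p)
    (hidx : orbitIndex T x p = orbitIndex T x q) (hidx' : orbitIndex T p x = orbitIndex T q x)
    (hpos : 0 < orbitDist T x p) :
    ∃ u, u ≤ p ∧ p ≤ T u ∧ u ≤ q ∧ q ≤ T u ∧ orbitDist T x u = orbitDist T x p - 1 := by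
  set α := orbitIndex T x p
  set β := orbitIndex T p x
  set u := p ⊓ q ⊓ (T ^ (α - 1)) x
  have hup : u ≤ p := inf_le_left.trans inf_le_left
  have hTu : T u = T p ⊓ T q ⊓ (T ^ α) x := by
    simp only [u, OrderIso.map_inf, ← OrderIso.zpow_add_one_apply, sub_add_cancel]
  have hpu : p ≤ T u := by
    rw [hTu]; exact le_inf (le_inf (hinc p).le hpq) (le_zpow_orbitIndex hinc hcof x p)
  have hqu : q ≤ T u := by
    rw [hTu, hidx]; exact le_inf (le_inf hqp (hinc q).le) (le_zpow_orbitIndex hinc hcof x q)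
  have hxu : orbitIndex T x u ≤ α - 1 := (orbitIndex_le_iff hinc hcof).2 inf_le_right
  have hxu' : α ≤ orbitIndex T x u + 1 :=
    (orbitIndex_mono_right hinc hcof hpu).trans_eq (orbitIndex_apply_right hinc hcof x u)
  have hux : orbitIndex T u x ≤ β := by
    refine (orbitIndex_le_iff hinc hcof).2 ?_
    simp only [u, OrderIso.map_inf, ← OrderIso.zpow_add_apply_s3]
    refine le_inf (le_inf (le_zpow_orbitIndex hinc hcof p x) ?_) ?_
    · rw [hidx']; exact le_zpow_orbitIndex hinc hcof q x
    · have : (0 : ℤ) ≤ β + (α - 1) := by unfold orbitDist at hpos; omega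
      simpa using (OrderIso.strictMono_zpow_apply hinc x).monotone this
  have hux' : β ≤ orbitIndex T u x := orbitIndex_anti_left hinc hcof hup
  refine ⟨u, hup, hpu, inf_le_left.trans inf_le_right, hqu, ?_⟩
  unfold orbitDist
  omega

end SemilatticeInf

section Lattice

variable {L : Type*} [Lattice L] {T : L ≃o L}

lemma mk_zpow_apply (T : L ≃o L) (k : ℤ) (x : L) :
    Quot.mk (zOrbitRel T) ((T ^ k) x) = Quot.mk (zOrbitRel T) x :=
  Quot.sound ⟨-k, by rw [← OrderIso.zpow_add_apply_s3, neg_add_cancel, zpow_zero]; rfl⟩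

lemma equivalence_zOrbitRel (T : L ≃o L) : Equivalence (zOrbitRel T) :=
  ⟨fun _ => ⟨0, rfl⟩,
    fun ⟨k, hk⟩ => ⟨-k, by rw [← hk, ← OrderIso.zpow_add_apply_s3, neg_add_cancel, zpow_zero]; rfl⟩,
    fun ⟨k, hk⟩ ⟨l, hl⟩ => ⟨l + k, by rw [OrderIso.zpow_add_apply_s3, hk, hl]⟩⟩

lemma exists_zpow_apply_eq_of_mk_eq {x y : L}
    (h : Quot.mk (zOrbitRel T) x = Quot.mk (zOrbitRel T) y) : ∃ k : ℤ, (T ^ k) x = y :=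
  (equivalence_zOrbitRel T).eqvGen_iff.1 (Quot.eq.1 h)

lemma exists_le_of_quotGraph_adj_mk {z : Quot (zOrbitRel T)} {t : L}
    (h : (quotGraph T).Adj z (Quot.mk _ t)) : ∃ z₀, Quot.mk _ z₀ = z ∧ z₀ ≤ t ∧ t ≤ T z₀ := by
  obtain ⟨-, z₁, t₁, rfl, ht, h₁, h₂⟩ := h
  obtain ⟨k, rfl⟩ := exists_zpow_apply_eq_of_mk_eq ht
  refine ⟨(T ^ k) z₁, mk_zpow_apply T k z₁, (T ^ k).monotone h₁, ?_⟩
  rw [← OrderIso.zpow_apply_apply_comm]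
  exact (T ^ k).monotone h₂

variable (hinc : ∀ x, x < T x) (hcof : ∀ x y : L, ∃ k : ℤ, y ≤ (T ^ k) x)

include hinc hcof in
lemma orbitDist_congr {x x' y y' : L} (hx : Quot.mk (zOrbitRel T) x = Quot.mk _ x')
    (hy : Quot.mk (zOrbitRel T) y = Quot.mk _ y') : orbitDist T x y = orbitDist T x' y' := by
  obtain ⟨k, rfl⟩ := exists_zpow_apply_eq_of_mk_eq hx
  obtain ⟨l, rfl⟩ := exists_zpow_apply_eq_of_mk_eq hy
  rw [orbitDist_zpow_right hinc hcof, orbitDist_comm ((T ^ k) x), orbitDist_zpow_right hinc hcof,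
    orbitDist_comm]

include hinc in
lemma exists_walk_mk_length_le (c : ℕ) {x y : L} (h₁ : y ≤ x) (h₂ : x ≤ (T ^ (c : ℤ)) y) :
    ∃ W : (quotGraph T).Walk (Quot.mk _ x) (Quot.mk _ y), W.length ≤ c := by
  induction c generalizing x with
  | zero => exact ⟨.copy .nil (congrArg _ (le_antisymm (by simpa using h₂) h₁)).symm rfl, by simp⟩
  | succ c ih =>
    set w := y ⊔ T.symm x
    have hwx : w ≤ x := sup_le h₁ (T.symm_apply_le.2 (hinc x).le)
    have hxw : x ≤ T w := T.symm_apply_le.1 le_sup_right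
    have hwc : w ≤ (T ^ (c : ℤ)) y := by
      refine sup_le ?_ (T.symm_apply_le.2 ?_)
      · simpa using (OrderIso.strictMono_zpow_apply hinc y).monotone (Int.natCast_nonneg c)
      · rwa [← OrderIso.zpow_add_one_apply, ← Nat.cast_add_one]
    obtain ⟨W, hW⟩ := ih le_sup_left hwc
    by_cases he : Quot.mk (zOrbitRel T) w = Quot.mk _ x
    · exact ⟨W.copy he rfl, by simp only [Walk.length_copy]; omega⟩
    · have hadj : (quotGraph T).Adj (Quot.mk _ w) (Quot.mk _ x) := ⟨he, w, x, rfl, rfl, hwx, hxw⟩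
      exact ⟨.cons hadj.symm W, by simpa using hW⟩

include hinc hcof in
lemma exists_walk_mk_length_le_orbitDist (x y : L) :
    ∃ W : (quotGraph T).Walk (Quot.mk _ x) (Quot.mk _ y), (W.length : ℤ) ≤ orbitDist T x y := by
  set y' := (T ^ (-orbitIndex T x y)) y
  have hy' : Quot.mk (zOrbitRel T) y' = Quot.mk _ y := mk_zpow_apply T _ y
  have h₁ : y' ≤ x := by
    have : orbitIndex T x y' ≤ 0 := by rw [orbitIndex_zpow_right hinc hcof]; omega
    simpa using (orbitIndex_le_iff hinc hcof).1 this
  have h₂ : x ≤ (T ^ ((orbitDist T x y).toNat : ℤ)) y' := by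
    rw [← orbitIndex_le_iff hinc hcof, orbitIndex_zpow_left hinc hcof,
      Int.toNat_of_nonneg (orbitDist_nonneg hinc hcof x y), orbitDist]
    omega
  obtain ⟨W, hW⟩ := exists_walk_mk_length_le hinc _ h₁ h₂
  have := orbitDist_nonneg hinc hcof x y
  exact ⟨W.copy rfl hy', by simp only [Walk.length_copy]; omega⟩

include hinc hcof in
lemma orbitDist_le_length {u v : Quot (zOrbitRel T)} (W : (quotGraph T).Walk u v) {x y : L}
    (hx : Quot.mk _ x = u) (hy : Quot.mk _ y = v) : orbitDist T x y ≤ W.length := by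
  induction W generalizing x with
  | nil =>
    rw [orbitDist_congr hinc hcof (hx.trans hy.symm) rfl, orbitDist, orbitIndex_self hinc hcof]
    simp
  | cons hadj W ih =>
    rw [Walk.length_cons, Nat.cast_add_one]
    obtain ⟨-, p, r, hp, hr, h₁, h₂⟩ := hadj
    rw [orbitDist_congr hinc hcof (hx.trans hp.symm) rfl]
    have := orbitDist_le_add hinc hcof p r y
    have := orbitDist_le_one hinc hcof h₁ h₂
    have := ih hr hy
    omega

include hinc hcof in
theorem quotGraph_dist_mk (x y : L) :
    ((quotGraph T).dist (Quot.mk _ x) (Quot.mk _ y) : ℤ) = orbitDist T x y := by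
  obtain ⟨W, hW⟩ := exists_walk_mk_length_le_orbitDist hinc hcof x y
  obtain ⟨W', hW'⟩ := W.reachable.exists_walk_length_eq_dist
  have := orbitDist_le_length hinc hcof W' rfl rfl
  have := dist_le W
  omega

include hinc hcof in
lemma exists_quotGraph_common_neighbor (x p q : L) (hpq : p ≤ T q) (hqp : q ≤ T p)
    (hidx : orbitIndex T x p = orbitIndex T x q) {n : ℕ} (hn : 1 ≤ n)
    (hp : (quotGraph T).dist (Quot.mk _ x) (Quot.mk _ p) = n)
    (hq : (quotGraph T).dist (Quot.mk _ x) (Quot.mk _ q) = n) :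
    ∃ u, (quotGraph T).dist (Quot.mk _ x) u = n - 1 ∧
      (quotGraph T).dist u (Quot.mk _ p) = 1 ∧ (quotGraph T).dist u (Quot.mk _ q) = 1 := by
  have hp' := quotGraph_dist_mk hinc hcof x p
  have hq' := quotGraph_dist_mk hinc hcof x q
  rw [hp] at hp'
  rw [hq] at hq'
  obtain ⟨u, hup, hpu, huq, hqu, hu⟩ := exists_inf_common_neighbor hinc hcof x p q hpq hqp hidx
    (by unfold orbitDist at hp' hq'; omega) (by omega)
  have hxu := quotGraph_dist_mk hinc hcof x u
  have hxu' : (quotGraph T).dist (Quot.mk _ x) (Quot.mk _ u) = n - 1 := by omega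
  have hne : ∀ {s : L}, (quotGraph T).dist (Quot.mk _ x) (Quot.mk _ s) = n →
      Quot.mk (zOrbitRel T) u ≠ Quot.mk _ s := fun hs he => by rw [he] at hxu'; omega
  exact ⟨_, hxu', dist_eq_one_iff_adj.2 ⟨hne hp, u, p, rfl, rfl, hup, hpu⟩,
    dist_eq_one_iff_adj.2 ⟨hne hq, u, q, rfl, rfl, huq, hqu⟩⟩

include hinc hcof in
theorem quotGraph_triangle_condition {x y z : Quot (zOrbitRel T)} {n : ℕ} (hn : 1 ≤ n)
    (hyz : (quotGraph T).Adj y z) (hy : (quotGraph T).dist x y = n)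
    (hz : (quotGraph T).dist x z = n) :
    ∃ u, (quotGraph T).dist x u = n - 1 ∧ (quotGraph T).dist u y = 1 ∧
      (quotGraph T).dist u z = 1 := by
  obtain ⟨x₀, rfl⟩ := Quot.exists_rep x
  obtain ⟨-, y₀, z₀, rfl, rfl, h₁, h₂⟩ := hyz
  have hlo := orbitIndex_mono_right hinc hcof (x := x₀) h₁
  have hhi := (orbitIndex_mono_right hinc hcof (x := x₀) h₂).trans_eq
    (orbitIndex_apply_right hinc hcof x₀ y₀)
  rcases hlo.eq_or_lt with heq | hlt
  · exact exists_quotGraph_common_neighbor hinc hcof x₀ y₀ z₀ (h₁.trans (hinc z₀).le) h₂ heq hn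
      hy hz
  · -- `a(x, z₀) = a(x, y₀) + 1`, so use the representative `y₀ + 1` instead of `y₀`
    have hTy : Quot.mk (zOrbitRel T) (T y₀) = Quot.mk _ y₀ := by simpa using mk_zpow_apply T 1 y₀
    obtain ⟨u, hu, huz, huy⟩ := exists_quotGraph_common_neighbor hinc hcof x₀ z₀ (T y₀)
      (h₂.trans (T.monotone (hinc y₀).le)) (T.monotone h₁)
      (by rw [orbitIndex_apply_right hinc hcof]; omega) hn hz (by rwa [hTy])
    exact ⟨u, hu, by rwa [hTy] at huy, huz⟩

include hinc hcof in
theorem quotGraph_quadrangle_condition {x y z t : Quot (zOrbitRel T)} {n : ℕ} (hn : 1 ≤ n)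
    (hy : (quotGraph T).dist x y = n) (hz : (quotGraph T).dist x z = n)
    (hyt : (quotGraph T).Adj y t) (hzt : (quotGraph T).Adj z t)
    (ht : (quotGraph T).dist x t = n + 1) :
    ∃ u, (quotGraph T).dist x u = n - 1 ∧ (quotGraph T).dist u y = 1 ∧
      (quotGraph T).dist u z = 1 := by
  obtain ⟨x₀, rfl⟩ := Quot.exists_rep x
  obtain ⟨-, y₀, t₀, rfl, rfl, hyt₀, hty₀⟩ := hyt
  obtain ⟨z₀, rfl, hzt₀, htz₀⟩ := exists_le_of_quotGraph_adj_mk hzt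
  have hidx : ∀ {s : L}, s ≤ t₀ → t₀ ≤ T s → (quotGraph T).dist (Quot.mk _ x₀) (Quot.mk _ s) = n →
      orbitIndex T x₀ t₀ = orbitIndex T x₀ s + 1 := fun h₁ h₂ hs => by
    refine orbitIndex_eq_add_one_of_orbitDist_eq_add_one hinc hcof h₁ h₂ ?_
    rw [← quotGraph_dist_mk hinc hcof, ← quotGraph_dist_mk hinc hcof, ht, hs]
    push_cast; rfl
  exact exists_quotGraph_common_neighbor hinc hcof x₀ y₀ z₀ (hyt₀.trans htz₀) (hzt₀.trans hty₀)
    (by have := hidx hyt₀ hty₀ hy; have := hidx hzt₀ htz₀ hz; omega) hn hy hz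

end Lattice

theorem quotGraph_weakly_modular_general {L : Type*} [Lattice L] (T : L ≃o L)
    (hinc : ∀ x : L, x < T x)
    (hcof : ∀ x y : L, ∃ k : ℕ, (T ^ (k : ℤ))⁻¹ x ≤ y ∧ y ≤ (T ^ (k : ℤ)) x) :
    (∀ (x : Quot (zOrbitRel T)) (n : ℕ), 2 ≤ n →
      ∀ y z : Quot (zOrbitRel T), (quotGraph T).Adj y z →
        (quotGraph T).dist x y = n → (quotGraph T).dist x z = n →
        ∃ u, (quotGraph T).dist x u = n - 1 ∧
          (quotGraph T).dist u y = 1 ∧ (quotGraph T).dist u z = 1) ∧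
    (∀ (x : Quot (zOrbitRel T)) (n : ℕ), 2 ≤ n →
      ∀ y z t : Quot (zOrbitRel T),
        (quotGraph T).dist x y = n → (quotGraph T).dist x z = n →
        (quotGraph T).Adj y t → (quotGraph T).Adj z t → (quotGraph T).dist x t = n + 1 →
        ∃ u, (quotGraph T).dist x u = n - 1 ∧
          (quotGraph T).dist u y = 1 ∧ (quotGraph T).dist u z = 1) := by
  have hcof' : ∀ x y : L, ∃ k : ℤ, y ≤ (T ^ k) x := fun x y =>
    let ⟨k, hk⟩ := hcof x y; ⟨k, hk.2⟩
  exact ⟨fun x n hn y z hyz hy hz =>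
      quotGraph_triangle_condition hinc hcof' (by omega) hyz hy hz,
    fun x n hn y z t hy hz hyt hzt ht =>
      quotGraph_quadrangle_condition hinc hcof' (by omega) hy hz hyt hzt ht⟩

/-- Theorem 2.1. The quotient graph `X = L/ℤ` is weakly modular:
it satisfies the triangle condition and the quadrangle condition at every vertex
and for every distance `n ≥ 2`. -/
theorem quotGraph_weakly_modular {L : Type*} [Lattice L] (T : L ≃o L)
    (hjoin : ∀ S : Set L, S.Nonempty → BddAbove S → ∃ j, IsLUB S j)
    (hinc : ∀ x : L, x < T x)
    (hcof : ∀ x y : L, ∃ k : ℕ, (T ^ (k : ℤ))⁻¹ x ≤ y ∧ y ≤ (T ^ (k : ℤ)) x) :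
    (∀ (x : Quot (zOrbitRel T)) (n : ℕ), 2 ≤ n →
      ∀ y z : Quot (zOrbitRel T), (quotGraph T).Adj y z →
        (quotGraph T).dist x y = n → (quotGraph T).dist x z = n →
        ∃ u, (quotGraph T).dist x u = n - 1 ∧
          (quotGraph T).dist u y = 1 ∧ (quotGraph T).dist u z = 1) ∧
    (∀ (x : Quot (zOrbitRel T)) (n : ℕ), 2 ≤ n →
      ∀ y z t : Quot (zOrbitRel T),
        (quotGraph T).dist x y = n → (quotGraph T).dist x z = n →
        (quotGraph T).Adj y t → (quotGraph T).Adj z t → (quotGraph T).dist x t = n + 1 →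
        ∃ u, (quotGraph T).dist x u = n - 1 ∧
          (quotGraph T).dist u y = 1 ∧ (quotGraph T).dist u z = 1) :=
  quotGraph_weakly_modular_general T hinc hcof
end

section
/- Let L and X be as above (X the graph on vertex set L with edges when x ≤ y ≤ x + 1 or y ≤ x ≤ y + 1). Then for all x, y ∈ L, the graph distance satisfies d(x,y) = min{n + m | n, m ∈ ℕ, x ≤ y + n and y ≤ x + m}. Moreover, x ∨ y and x ∧ y each lie on a geodesic between x and y. -/
open SimpleGraph

/-- The graph `X` on the vertex set `L`, with an edge between `x` and `y` iff
`x ≤ y ≤ x + 1` or `y ≤ x ≤ y + 1`, where `x + 1 = T x` for the order automorphism `T`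
generating the `ℤ`-action. -/
def stepGraph {L : Type*} [Lattice L] (T : L ≃o L) : SimpleGraph L where
  Adj x y := x ≠ y ∧ ((x ≤ y ∧ y ≤ T x) ∨ (y ≤ x ∧ x ≤ T y))
  symm := ⟨by rintro x y ⟨hne, h⟩; exact ⟨hne.symm, h.symm⟩⟩
  loopless := ⟨by rintro x ⟨hne, -⟩; exact hne rfl⟩

/-!
Along an edge `u — v` one of `u`, `v` moves up by at most one step of `T`
relative to the other, so a walk of length `ℓ` from `x` to `y` yields `n + m ≤ ℓ` with
`x ≤ y + n` and `y ≤ x + m`. Conversely, if `a ≤ b ≤ a + k` then the chain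
`a ≤ b ⊓ (a + 1) ≤ b ⊓ (a + 2) ≤ ⋯ ≤ b ⊓ (a + k) = b` is a walk of length at most `k`.
For an optimal pair `(n, m)` this gives walks `x → x ⊔ y → y` and `x → x ⊓ y → y` of
length `m + n`, which is therefore both the distance and the length of these detours.
-/

namespace OrderIso

variable {α : Type*} [Preorder α] {T : α ≃o α}

lemma pow_succ_apply (n : ℕ) (z : α) : (T ^ (n + 1)) z = T ((T ^ n) z) := by
  rw [pow_succ']; rfl

lemma le_pow_apply_self (hle : ∀ x, x ≤ T x) (n : ℕ) (z : α) : z ≤ (T ^ n) z := by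
  induction n generalizing z with
  | zero => simp
  | succ n ih => rw [pow_succ_apply]; exact (ih z).trans (hle _)

lemma exists_le_pow_of_zpow_bounds
    (hcof : ∀ x y : α, ∃ k : ℕ, (T ^ (k : ℤ))⁻¹ x ≤ y ∧ y ≤ (T ^ (k : ℤ)) x) (x y : α) :
    ∃ n m : ℕ, x ≤ (T ^ n) y ∧ y ≤ (T ^ m) x := by
  obtain ⟨k, hxy, hyx⟩ := hcof x y
  rw [zpow_natCast] at hxy hyx
  exact ⟨k, k, (OrderIso.symm_apply_le _).mp hxy, hyx⟩

end OrderIso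

namespace stepGraph

open OrderIso

variable {L : Type*} [Lattice L] {T : L ≃o L}

lemma exists_le_pow_of_walk {a b : L} (p : (stepGraph T).Walk a b) :
    ∃ n m : ℕ, n + m ≤ p.length ∧ a ≤ (T ^ n) b ∧ b ≤ (T ^ m) a := by
  induction p with
  | nil => exact ⟨0, 0, le_rfl, le_rfl, le_rfl⟩
  | @cons u v w huv p ih =>
    obtain ⟨n, m, hlen, hvw, hwv⟩ := ih
    rw [Walk.length_cons]
    rcases huv.2 with ⟨huv, hvu⟩ | ⟨hvu, huv⟩
    · refine ⟨n, m + 1, by omega, huv.trans hvw, ?_⟩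
      calc w ≤ (T ^ m) v := hwv
        _ ≤ (T ^ m) (T u) := (T ^ m).monotone hvu
        _ = (T ^ (m + 1)) u := by rw [pow_succ]; rfl
    · refine ⟨n + 1, m, by omega, ?_, hwv.trans ((T ^ m).monotone hvu)⟩
      rw [pow_succ_apply]
      exact huv.trans (T.monotone hvw)

lemma exists_walk_length_le (hle : ∀ x, x ≤ T x) {k : ℕ} {a b : L} (hab : a ≤ b)
    (hba : b ≤ (T ^ k) a) : ∃ p : (stepGraph T).Walk a b, p.length ≤ k := by
  induction k generalizing b with
  | zero => exact ⟨Walk.nil.copy rfl (le_antisymm hab hba), by simp⟩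
  | succ k ih =>
    set c := b ⊓ (T ^ k) a
    obtain ⟨p, hp⟩ := ih (le_inf hab (le_pow_apply_self hle k a)) (inf_le_right : c ≤ _)
    have hbc : b ≤ T c := by
      rw [OrderIso.map_inf, ← pow_succ_apply]
      exact le_inf (hle b) hba
    by_cases hcb : c = b
    · exact ⟨p.copy rfl hcb, by rw [Walk.length_copy]; omega⟩
    · have hadj : (stepGraph T).Adj c b := ⟨hcb, .inl ⟨inf_le_left, hbc⟩⟩
      exact ⟨p.concat hadj, by rw [Walk.length_concat]; omega⟩

lemma dist_le_of_le_pow (hle : ∀ x, x ≤ T x) {k : ℕ} {a b : L} (hab : a ≤ b)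
    (hba : b ≤ (T ^ k) a) : (stepGraph T).dist a b ≤ k :=
  let ⟨p, hp⟩ := exists_walk_length_le hle hab hba
  (dist_le p).trans hp

lemma preconnected (hle : ∀ x, x ≤ T x)
    (hcof : ∀ x y : L, ∃ k : ℕ, (T ^ (k : ℤ))⁻¹ x ≤ y ∧ y ≤ (T ^ (k : ℤ)) x) :
    (stepGraph T).Preconnected := by
  intro x y
  obtain ⟨n, m, hxy, hyx⟩ := exists_le_pow_of_zpow_bounds hcof x y
  obtain ⟨p, -⟩ := exists_walk_length_le hle le_sup_left (sup_le (le_pow_apply_self hle m x) hyx)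
  obtain ⟨q, -⟩ := exists_walk_length_le hle le_sup_right (sup_le hxy (le_pow_apply_self hle n y))
  exact (p.append q.reverse).reachable

lemma sInf_le_dist {x y : L} (h : (stepGraph T).Reachable x y) :
    sInf {d : ℕ | ∃ n m : ℕ, d = n + m ∧ x ≤ (T ^ n) y ∧ y ≤ (T ^ m) x} ≤
      (stepGraph T).dist x y := by
  obtain ⟨p, hp⟩ := h.exists_walk_length_eq_dist
  obtain ⟨n, m, hlen, hxy, hyx⟩ := exists_le_pow_of_walk p
  refine (Nat.sInf_le ?_).trans (hp ▸ hlen)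
  exact ⟨n, m, rfl, hxy, hyx⟩

end stepGraph

open OrderIso stepGraph in
theorem stepGraph_dist_eq_general {L : Type*} [Lattice L] (T : L ≃o L)
    (hinc : ∀ x : L, x < T x)
    (hcof : ∀ x y : L, ∃ k : ℕ, (T ^ (k : ℤ))⁻¹ x ≤ y ∧ y ≤ (T ^ (k : ℤ)) x)
    (x y : L) :
    (stepGraph T).dist x y =
      sInf {d : ℕ | ∃ n m : ℕ, d = n + m ∧ x ≤ (T ^ n) y ∧ y ≤ (T ^ m) x} ∧
    (stepGraph T).dist x (x ⊔ y) + (stepGraph T).dist (x ⊔ y) y = (stepGraph T).dist x y ∧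
    (stepGraph T).dist x (x ⊓ y) + (stepGraph T).dist (x ⊓ y) y = (stepGraph T).dist x y := by
  have hle : ∀ x, x ≤ T x := fun x ↦ (hinc x).le
  have hconn := preconnected hle hcof
  have hne : {d : ℕ | ∃ n m : ℕ, d = n + m ∧ x ≤ (T ^ n) y ∧ y ≤ (T ^ m) x}.Nonempty :=
    let ⟨n, m, hxy, hyx⟩ := exists_le_pow_of_zpow_bounds hcof x y
    ⟨n + m, n, m, rfl, hxy, hyx⟩
  obtain ⟨n, m, hnm, hxy, hyx⟩ := Nat.sInf_mem hne
  have hlower := sInf_le_dist (hconn x y)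
  have hx_sup : (stepGraph T).dist x (x ⊔ y) ≤ m :=
    dist_le_of_le_pow hle le_sup_left (sup_le (le_pow_apply_self hle m x) hyx)
  have hsup_y : (stepGraph T).dist (x ⊔ y) y ≤ n := dist_comm.trans_le <|
    dist_le_of_le_pow hle le_sup_right (sup_le hxy (le_pow_apply_self hle n y))
  have hx_inf : (stepGraph T).dist x (x ⊓ y) ≤ n := dist_comm.trans_le <|
    dist_le_of_le_pow hle inf_le_left
      (by rw [OrderIso.map_inf]; exact le_inf (le_pow_apply_self hle n x) hxy)
  have hinf_y : (stepGraph T).dist (x ⊓ y) y ≤ m :=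
    dist_le_of_le_pow hle inf_le_right
      (by rw [OrderIso.map_inf]; exact le_inf hyx (le_pow_apply_self hle m y))
  have htri_sup := (hconn x (x ⊔ y)).dist_triangle_left y
  have htri_inf := (hconn x (x ⊓ y)).dist_triangle_left y
  refine ⟨by omega, by omega, by omega⟩

/-- Lemma 3.3. In the graph `X` on `L`, for all `x, y ∈ L` the graph
distance satisfies `d(x,y) = min {n + m | n, m ∈ ℕ, x ≤ y + n and y ≤ x + m}`; moreover,
`x ⊔ y` and `x ⊓ y` each lie on a geodesic between `x` and `y`. -/
theorem stepGraph_dist_eq {L : Type*} [Lattice L] (T : L ≃o L)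
    (hjoin : ∀ S : Set L, S.Nonempty → BddAbove S → ∃ j, IsLUB S j)
    (hinc : ∀ x : L, x < T x)
    (hcof : ∀ x y : L, ∃ k : ℕ, (T ^ (k : ℤ))⁻¹ x ≤ y ∧ y ≤ (T ^ (k : ℤ)) x)
    (x y : L) :
    (stepGraph T).dist x y =
      sInf {d : ℕ | ∃ n m : ℕ, d = n + m ∧ x ≤ (T ^ n) y ∧ y ≤ (T ^ m) x} ∧
    (stepGraph T).dist x (x ⊔ y) + (stepGraph T).dist (x ⊔ y) y = (stepGraph T).dist x y ∧
    (stepGraph T).dist x (x ⊓ y) + (stepGraph T).dist (x ⊓ y) y = (stepGraph T).dist x y :=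
  stepGraph_dist_eq_general T hinc hcof x y
end

section
/- Let L and X be as above (graph on vertex set L). Then X satisfies the local quadrangle condition: for any x, y, z, t ∈ L with d(x,y) = d(x,z) = 2, d(x,t) = 3 and d(y,t) = d(z,t) = 1, there exists u ∈ L with d(x,u) = d(y,u) = d(z,u) = 1. -/
open SimpleGraph

/-!
The distance `d(a, b)` is the least `p + q` with `b ≤ T^p a` and `a ≤ T^q b`: each edge of a
walk costs one step in `p` or in `q`, and conversely `a` and `b` climb to `a ⊔ b` in `p` resp.
`q` steps. Reversing the order and replacing `T` by `T⁻¹` leaves `X` unchanged, so one may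
assume `x ≤ T t`. The distance conditions then leave only a few positions of `y` and `z`
relative to `x` and `t`, and in each of them one of `y ⊓ z ⊓ T x`, `x ⊔ y ⊔ z`,
`z ⊓ T x ⊓ T y` is a common neighbour of `x`, `y` and `z`.
-/

namespace SimpleGraph

variable {V W : Type*} {G : SimpleGraph V} {G' : SimpleGraph W}

theorem Hom.edist_le (f : G →g G') (u v : V) : G'.edist (f u) (f v) ≤ G.edist u v := by
  by_cases h : G.Reachable u v
  · obtain ⟨p, hp⟩ := h.exists_walk_length_eq_edist
    rw [← hp, ← p.length_map f]
    exact (p.map f).edist_le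
  · simp [edist_eq_top_of_not_reachable h]

theorem Iso.dist_eq (e : G ≃g G') (u v : V) : G'.dist (e u) (e v) = G.dist u v := by
  have h := e.symm.toHom.edist_le (e u) (e v)
  simp only [RelHom.coeFn_mk, RelIso.coe_fn_toEquiv, RelIso.symm_apply_apply] at h
  exact congrArg ENat.toNat (le_antisymm (e.toHom.edist_le u v) h)

end SimpleGraph

namespace stepGraph

variable {L : Type*} [Lattice L] {T : L ≃o L}

theorem le_iterate_apply (hinc : ∀ a, a < T a) (n : ℕ) (a : L) : a ≤ T^[n] a :=
  Function.id_le_iterate_of_id_le (fun b => (hinc b).le) n a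

theorem iterate_apply_mono (hinc : ∀ a, a < T a) {m n : ℕ} (h : m ≤ n) (a : L) :
    T^[m] a ≤ T^[n] a :=
  Function.monotone_iterate_of_id_le (fun b => (hinc b).le) h a

theorem exists_le_iterate_of_walk {a b : L} (w : (stepGraph T).Walk a b) :
    ∃ p q, p + q ≤ w.length ∧ b ≤ T^[p] a ∧ a ≤ T^[q] b := by
  induction w with
  | nil => exact ⟨0, 0, le_rfl, le_rfl, le_rfl⟩
  | @cons a c b hac w ih =>
    obtain ⟨p, q, hpq, hbc, hcb⟩ := ih
    rw [Walk.length_cons]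
    obtain ⟨-, ⟨hac, hca⟩ | ⟨hca, hac⟩⟩ := hac
    · refine ⟨p + 1, q, by omega, ?_, hac.trans hcb⟩
      rw [Function.iterate_succ_apply]
      exact hbc.trans (T.monotone.iterate p hca)
    · refine ⟨p, q + 1, by omega, hbc.trans (T.monotone.iterate p hca), ?_⟩
      rw [Function.iterate_succ_apply']
      exact hac.trans (T.monotone hcb)

theorem exists_walk_of_le_of_le_iterate (hinc : ∀ a, a < T a) {a b : L} {n : ℕ} (hab : a ≤ b)
    (hba : b ≤ T^[n] a) : ∃ w : (stepGraph T).Walk a b, w.length ≤ n := by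
  induction n generalizing b with
  | zero => exact ⟨.copy .nil rfl (le_antisymm hab hba), by simp⟩
  | succ n ih =>
    -- the last step of the walk goes from `b ⊓ T^[n] a` up to `b`
    obtain ⟨w, hw⟩ := ih (le_inf hab (le_iterate_apply hinc n a)) inf_le_right
    by_cases hb : b ⊓ T^[n] a = b
    · exact ⟨w.copy rfl hb, by rw [Walk.length_copy]; omega⟩
    · have hbT : b ≤ T (b ⊓ T^[n] a) := by
        rw [T.map_inf, ← Function.iterate_succ_apply' T]
        exact le_inf (hinc b).le hba
      have hadj : (stepGraph T).Adj (b ⊓ T^[n] a) b := ⟨hb, .inl ⟨inf_le_left, hbT⟩⟩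
      exact ⟨w.concat hadj, by rw [Walk.length_concat]; omega⟩

theorem dist_le_of_le_iterate (hinc : ∀ a, a < T a) {a b : L} {p q : ℕ} (hp : b ≤ T^[p] a)
    (hq : a ≤ T^[q] b) : (stepGraph T).dist a b ≤ p + q := by
  obtain ⟨wa, ha⟩ := exists_walk_of_le_of_le_iterate hinc (b := a ⊔ b) le_sup_left
    (sup_le (le_iterate_apply hinc p a) hp)
  obtain ⟨wb, hb⟩ := exists_walk_of_le_of_le_iterate hinc (b := a ⊔ b) le_sup_right
    (sup_le hq (le_iterate_apply hinc q b))
  calc (stepGraph T).dist a b ≤ (wa.append wb.reverse).length := dist_le _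
    _ ≤ p + q := by rw [Walk.length_append, Walk.length_reverse]; omega

theorem dist_le_iff (hinc : ∀ a, a < T a) {a b : L} (h : (stepGraph T).Reachable a b) {n : ℕ} :
    (stepGraph T).dist a b ≤ n ↔ ∃ p q, p + q ≤ n ∧ b ≤ T^[p] a ∧ a ≤ T^[q] b := by
  refine ⟨fun hn => ?_, fun ⟨p, q, hpq, hp, hq⟩ => (dist_le_of_le_iterate hinc hp hq).trans hpq⟩
  obtain ⟨w, hw⟩ := h.exists_walk_length_eq_dist
  obtain ⟨p, q, hpq, hp, hq⟩ := exists_le_iterate_of_walk w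
  exact ⟨p, q, by omega, hp, hq⟩

theorem dist_le_two_cases (hinc : ∀ a, a < T a) {a b : L} (h : (stepGraph T).Reachable a b)
    (hd : (stepGraph T).dist a b ≤ 2) :
    (a ≤ b ∧ b ≤ T (T a)) ∨ (b ≤ T a ∧ a ≤ T b) ∨ (b ≤ a ∧ a ≤ T (T b)) := by
  obtain ⟨p, q, hpq, hp, hq⟩ := (dist_le_iff hinc h).1 hd
  rcases Nat.eq_zero_or_pos q with rfl | hq0
  · exact .inl ⟨hq, hp.trans (iterate_apply_mono hinc (n := 2) (by omega) a)⟩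
  rcases Nat.eq_zero_or_pos p with rfl | hp0
  · exact .inr (.inr ⟨hp, hq.trans (iterate_apply_mono hinc (n := 2) (by omega) b)⟩)
  exact .inr (.inl ⟨hp.trans (iterate_apply_mono hinc (n := 1) (by omega) a),
    hq.trans (iterate_apply_mono hinc (n := 1) (by omega) b)⟩)

theorem le_apply_or_le_apply_of_dist_le_three (hinc : ∀ a, a < T a) {a b : L}
    (h : (stepGraph T).Reachable a b) (hd : (stepGraph T).dist a b ≤ 3) : a ≤ T b ∨ b ≤ T a := by
  obtain ⟨p, q, hpq, hp, hq⟩ := (dist_le_iff hinc h).1 hd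
  by_cases hq1 : q ≤ 1
  · exact .inl (hq.trans (iterate_apply_mono hinc (n := 1) hq1 b))
  · exact .inr (hp.trans (iterate_apply_mono hinc (n := 1) (by omega) a))

def TwoStepsAbove (T : L ≃o L) (a b : L) : Prop :=
  a ≤ b ∧ b ≤ T (T a) ∧ ¬ b ≤ T a

def IncompWithinStep (T : L ≃o L) (a b : L) : Prop :=
  b ≤ T a ∧ a ≤ T b ∧ ¬ b ≤ a ∧ ¬ a ≤ b

variable {x y z : L}

theorem exists_common_neighbor_of_twoStepsAbove (hinc : ∀ a, a < T a)
    (hy : TwoStepsAbove T x y) (hz : TwoStepsAbove T x z) (hyz : y ≤ T z) (hzy : z ≤ T y) :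
    ∃ u, (stepGraph T).Adj x u ∧ (stepGraph T).Adj y u ∧ (stepGraph T).Adj z u := by
  obtain ⟨hxy, hyx, hy⟩ := hy
  obtain ⟨hxz, hzx, hz⟩ := hz
  have hux : y ⊓ z ⊓ T x ≤ T x := inf_le_right
  have hTu : T (y ⊓ z ⊓ T x) = T y ⊓ T z ⊓ T (T x) := by simp only [T.map_inf]
  have hyu : y ≤ T (y ⊓ z ⊓ T x) := hTu ▸ le_inf (le_inf (hinc y).le hyz) hyx
  have hzu : z ≤ T (y ⊓ z ⊓ T x) := hTu ▸ le_inf (le_inf hzy (hinc z).le) hzx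
  refine ⟨y ⊓ z ⊓ T x, ⟨fun h => hy (h ▸ hyu), .inl ⟨le_inf (le_inf hxy hxz) (hinc x).le, hux⟩⟩,
    ⟨fun h => hy (h ▸ hux), .inr ⟨inf_le_left.trans inf_le_left, hyu⟩⟩,
    ⟨fun h => hz (h ▸ hux), .inr ⟨inf_le_left.trans inf_le_right, hzu⟩⟩⟩

theorem exists_common_neighbor_of_incompWithinStep (hinc : ∀ a, a < T a)
    (hy : IncompWithinStep T x y) (hz : IncompWithinStep T x z) (hyz : y ≤ T z) (hzy : z ≤ T y) :
    ∃ u, (stepGraph T).Adj x u ∧ (stepGraph T).Adj y u ∧ (stepGraph T).Adj z u := by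
  obtain ⟨hyx, hxy, hy, hy'⟩ := hy
  obtain ⟨hzx, hxz, -, hz'⟩ := hz
  have hyu : y ≤ x ⊔ y ⊔ z := le_sup_right.trans le_sup_left
  refine ⟨x ⊔ y ⊔ z, ⟨fun h => hy (h ▸ hyu), .inl ⟨le_sup_left.trans le_sup_left, ?_⟩⟩,
    ⟨fun h => hy' (h ▸ le_sup_left.trans le_sup_left), .inl ⟨hyu, ?_⟩⟩,
    ⟨fun h => hz' (h ▸ le_sup_left.trans le_sup_left), .inl ⟨le_sup_right, ?_⟩⟩⟩
  · exact sup_le (sup_le (hinc x).le hyx) hzx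
  · exact sup_le (sup_le hxy (hinc y).le) hzy
  · exact sup_le (sup_le hxz hyz) (hinc z).le

theorem exists_common_neighbor_of_incompWithinStep_of_twoStepsAbove (hinc : ∀ a, a < T a)
    (hy : IncompWithinStep T x y) (hz : TwoStepsAbove T x z) (hyz : y ≤ z) (hzy : z ≤ T (T y)) :
    ∃ u, (stepGraph T).Adj x u ∧ (stepGraph T).Adj y u ∧ (stepGraph T).Adj z u := by
  obtain ⟨hyx, hxy, hy, hy'⟩ := hy
  obtain ⟨hxz, hzx, hz⟩ := hz
  have hxu : x ≤ z ⊓ T x ⊓ T y := le_inf (le_inf hxz (hinc x).le) hxy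
  have hyu : y ≤ z ⊓ T x ⊓ T y := le_inf (le_inf hyz hyx) (hinc y).le
  have hzu : z ≤ T (z ⊓ T x ⊓ T y) := by
    simp only [T.map_inf]
    exact le_inf (le_inf (hinc z).le hzx) hzy
  refine ⟨z ⊓ T x ⊓ T y, ⟨fun h => hy (h ▸ hyu), .inl ⟨hxu, inf_le_left.trans inf_le_right⟩⟩,
    ⟨fun h => hy' (h ▸ hxu), .inl ⟨hyu, inf_le_right⟩⟩,
    ⟨fun h => hz (h ▸ inf_le_left.trans inf_le_right), .inr ⟨inf_le_left.trans inf_le_left, hzu⟩⟩⟩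

variable {t w : L}

theorem twoStepsAbove_of_le (hinc : ∀ a, a < T a) (hxt : x ≤ t)
    (hdw : (stepGraph T).dist x w = 2) (hdt : (stepGraph T).dist x t = 3)
    (hadj : (stepGraph T).Adj w t) : TwoStepsAbove T x w ∧ w ≤ t ∧ t ≤ T w := by
  have hfar : ¬ t ≤ T (T x) := fun h => by
    have := dist_le_of_le_iterate hinc (p := 2) (q := 0) h hxt
    omega
  have hcases := dist_le_two_cases hinc (.of_dist_ne_zero (by omega)) hdw.le
  obtain ⟨-, ⟨hwt, htw⟩ | ⟨htw, -⟩⟩ := hadj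
  · have hw : ¬ w ≤ T x := fun h => hfar (htw.trans (T.monotone h))
    rcases hcases with ⟨h₁, h₂⟩ | ⟨h, -⟩ | ⟨h, -⟩
    · exact ⟨⟨h₁, h₂, hw⟩, hwt, htw⟩
    · exact absurd h hw
    · exact absurd (h.trans (hinc x).le) hw
  · refine absurd ?_ hfar
    rcases hcases with ⟨-, h⟩ | ⟨h, -⟩ | ⟨h, -⟩
    · exact htw.trans h
    · exact htw.trans (h.trans (hinc _).le)
    · exact htw.trans (h.trans ((hinc x).trans (hinc _)).le)

theorem incompWithinStep_or_twoStepsAbove_of_not_le (hinc : ∀ a, a < T a) (hxt : ¬ x ≤ t)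
    (hxTt : x ≤ T t) (hdw : (stepGraph T).dist x w = 2) (hdt : (stepGraph T).dist x t = 3)
    (hadj : (stepGraph T).Adj w t) :
    (IncompWithinStep T x w ∧ w ≤ t ∧ t ≤ T w) ∨ (TwoStepsAbove T x w ∧ t ≤ w ∧ w ≤ T t) := by
  have hfar : ¬ t ≤ T x := fun h => by
    have := dist_le_of_le_iterate hinc (p := 1) (q := 1) h hxTt
    omega
  have hcases := dist_le_two_cases hinc (.of_dist_ne_zero (by omega)) hdw.le
  obtain ⟨-, ⟨hwt, htw⟩ | ⟨htw, hwt⟩⟩ := hadj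
  · have hxw : ¬ x ≤ w := fun h => hxt (h.trans hwt)
    have hwx : ¬ w ≤ x := fun h => hfar (htw.trans (T.monotone h))
    rcases hcases with ⟨h, -⟩ | ⟨h₁, h₂⟩ | ⟨h, -⟩
    · exact absurd h hxw
    · exact .inl ⟨⟨h₁, h₂, hwx, hxw⟩, hwt, htw⟩
    · exact absurd h hwx
  · have hw : ¬ w ≤ T x := fun h => hfar (htw.trans h)
    rcases hcases with ⟨h₁, h₂⟩ | ⟨h, -⟩ | ⟨h, -⟩
    · exact .inr ⟨⟨h₁, h₂, hw⟩, htw, hwt⟩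
    · exact absurd h hw
    · exact absurd (h.trans (hinc x).le) hw

theorem exists_common_neighbor_of_le_apply (hinc : ∀ a, a < T a) (hle : x ≤ T t)
    (hxy : (stepGraph T).dist x y = 2) (hxz : (stepGraph T).dist x z = 2)
    (hxt : (stepGraph T).dist x t = 3)
    (hyt : (stepGraph T).Adj y t) (hzt : (stepGraph T).Adj z t) :
    ∃ u, (stepGraph T).Adj x u ∧ (stepGraph T).Adj y u ∧ (stepGraph T).Adj z u := by
  by_cases hxt' : x ≤ t
  · obtain ⟨hy, hyt', hty⟩ := twoStepsAbove_of_le hinc hxt' hxy hxt hyt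
    obtain ⟨hz, hzt', htz⟩ := twoStepsAbove_of_le hinc hxt' hxz hxt hzt
    exact exists_common_neighbor_of_twoStepsAbove hinc hy hz (hyt'.trans htz) (hzt'.trans hty)
  rcases incompWithinStep_or_twoStepsAbove_of_not_le hinc hxt' hle hxy hxt hyt with
    ⟨hy, hyt', hty⟩ | ⟨hy, hty, hyt'⟩ <;>
  rcases incompWithinStep_or_twoStepsAbove_of_not_le hinc hxt' hle hxz hxt hzt with
    ⟨hz, hzt', htz⟩ | ⟨hz, htz, hzt'⟩
  · exact exists_common_neighbor_of_incompWithinStep hinc hy hz (hyt'.trans htz) (hzt'.trans hty)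
  · exact exists_common_neighbor_of_incompWithinStep_of_twoStepsAbove hinc hy hz
      (hyt'.trans htz) (hzt'.trans (T.monotone hty))
  · obtain ⟨u, hxu, hzu, hyu⟩ := exists_common_neighbor_of_incompWithinStep_of_twoStepsAbove
      hinc hz hy (hzt'.trans hty) (hyt'.trans (T.monotone htz))
    exact ⟨u, hxu, hyu, hzu⟩
  · exact exists_common_neighbor_of_twoStepsAbove hinc hy hz
      (hyt'.trans (T.monotone htz)) (hzt'.trans (T.monotone hty))

def dualIso (T : L ≃o L) : stepGraph T ≃g stepGraph T.symm.dual where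
  toEquiv := OrderDual.toDual
  map_rel_iff' := by simp [stepGraph, OrderIso.symm_apply_le, or_comm]

theorem exists_common_neighbor_of_apply_le (hinc : ∀ a, a < T a) (hle : t ≤ T x)
    (hxy : (stepGraph T).dist x y = 2) (hxz : (stepGraph T).dist x z = 2)
    (hxt : (stepGraph T).dist x t = 3)
    (hyt : (stepGraph T).Adj y t) (hzt : (stepGraph T).Adj z t) :
    ∃ u, (stepGraph T).Adj x u ∧ (stepGraph T).Adj y u ∧ (stepGraph T).Adj z u := by
  let e := dualIso T
  have hinc' (a : Lᵒᵈ) : a < T.symm.dual a := T.symm_apply_lt.2 (hinc a)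
  obtain ⟨u, hxu, hyu, hzu⟩ := exists_common_neighbor_of_le_apply hinc' (x := e x) (y := e y)
    (z := e z) (t := e t) (T.symm_apply_le.2 hle) (by rwa [e.dist_eq]) (by rwa [e.dist_eq])
    (by rwa [e.dist_eq]) (e.map_adj_iff.2 hyt) (e.map_adj_iff.2 hzt)
  refine ⟨e.symm u, ?_, ?_, ?_⟩ <;> rw [← e.map_adj_iff, e.apply_symm_apply] <;> assumption

end stepGraph

theorem stepGraph_local_quadrangle_general {L : Type*} [Lattice L] (T : L ≃o L)
    (hinc : ∀ x : L, x < T x)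
    (x y z t : L)
    (hxy : (stepGraph T).dist x y = 2) (hxz : (stepGraph T).dist x z = 2)
    (hxt : (stepGraph T).dist x t = 3)
    (hyt : (stepGraph T).dist y t = 1) (hzt : (stepGraph T).dist z t = 1) :
    ∃ u : L, (stepGraph T).dist x u = 1 ∧ (stepGraph T).dist y u = 1 ∧
      (stepGraph T).dist z u = 1 := by
  simp only [dist_eq_one_iff_adj] at hyt hzt ⊢
  rcases stepGraph.le_apply_or_le_apply_of_dist_le_three hinc (.of_dist_ne_zero (by omega))
    hxt.le with hle | hle
  · exact stepGraph.exists_common_neighbor_of_le_apply hinc hle hxy hxz hxt hyt hzt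
  · exact stepGraph.exists_common_neighbor_of_apply_le hinc hle hxy hxz hxt hyt hzt

/-- Lemma 3.5. The graph `X` on `L` satisfies the local quadrangle
condition: for any `x, y, z, t ∈ L` with `d(x,y) = d(x,z) = 2`, `d(x,t) = 3` and
`d(y,t) = d(z,t) = 1`, there is `u ∈ L` with `d(x,u) = d(y,u) = d(z,u) = 1`. -/
theorem stepGraph_local_quadrangle {L : Type*} [Lattice L] (T : L ≃o L)
    (hjoin : ∀ S : Set L, S.Nonempty → BddAbove S → ∃ j, IsLUB S j)
    (hinc : ∀ x : L, x < T x)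
    (hcof : ∀ x y : L, ∃ k : ℕ, (T ^ (k : ℤ))⁻¹ x ≤ y ∧ y ≤ (T ^ (k : ℤ)) x)
    (x y z t : L)
    (hxy : (stepGraph T).dist x y = 2) (hxz : (stepGraph T).dist x z = 2)
    (hxt : (stepGraph T).dist x t = 3)
    (hyt : (stepGraph T).dist y t = 1) (hzt : (stepGraph T).dist z t = 1) :
    ∃ u : L, (stepGraph T).dist x u = 1 ∧ (stepGraph T).dist y u = 1 ∧
      (stepGraph T).dist z u = 1 :=
  stepGraph_local_quadrangle_general T hinc x y z t hxy hxz hxt hyt hzt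
end

section
/- Let L and X be as above (graph on vertex set L). Then the triangle-square complex of X is simply connected: every combinatorial loop in X is null-homotopic in the 2-complex obtained by filling every 3-cycle with a triangle and every induced 4-cycle with a square. -/
open SimpleGraph

/-- Homotopy of walks in the triangle-square complex of a graph `G`: the
equivalence relation on walks (with fixed endpoints) generated by removing backtracks
and by replacing one side of a filled triangle (any 3-cycle) or of a filled square
(any induced 4-cycle) by the other side. -/
inductive TriSqHomotopic {V : Type*} (G : SimpleGraph V) :
    ∀ {u v : V}, G.Walk u v → G.Walk u v → Prop
  | refl {u v : V} (p : G.Walk u v) : TriSqHomotopic G p p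
  | symm {u v : V} {p q : G.Walk u v} : TriSqHomotopic G p q → TriSqHomotopic G q p
  | trans {u v : V} {p q r : G.Walk u v} :
      TriSqHomotopic G p q → TriSqHomotopic G q r → TriSqHomotopic G p r
  | append_left {u v w : V} (p : G.Walk u v) {q r : G.Walk v w} :
      TriSqHomotopic G q r → TriSqHomotopic G (p.append q) (p.append r)
  | append_right {u v w : V} {p q : G.Walk u v} (r : G.Walk v w) :
      TriSqHomotopic G p q → TriSqHomotopic G (p.append r) (q.append r)
  | backtrack {u v : V} (h : G.Adj u v) :
      TriSqHomotopic G (SimpleGraph.Walk.cons h (SimpleGraph.Walk.cons h.symm SimpleGraph.Walk.nil))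
        SimpleGraph.Walk.nil
  | triangle {a b c : V} (hab : G.Adj a b) (hbc : G.Adj b c) (hac : G.Adj a c) :
      TriSqHomotopic G (SimpleGraph.Walk.cons hab (SimpleGraph.Walk.cons hbc SimpleGraph.Walk.nil))
        (SimpleGraph.Walk.cons hac SimpleGraph.Walk.nil)
  | square {a b c d : V} (hab : G.Adj a b) (hbc : G.Adj b c) (had : G.Adj a d)
      (hdc : G.Adj d c) (hac : ¬ G.Adj a c) (hbd : ¬ G.Adj b d) (hac' : a ≠ c) (hbd' : b ≠ d) :
      TriSqHomotopic G (SimpleGraph.Walk.cons hab (SimpleGraph.Walk.cons hbc SimpleGraph.Walk.nil))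
        (SimpleGraph.Walk.cons had (SimpleGraph.Walk.cons hdc SimpleGraph.Walk.nil))

/-!
If `f` sends adjacent vertices to equal or adjacent ones and moves every vertex of a loop by at
most one edge, the loop is homotopic to its image: the two are joined by a ladder whose rungs
are closed walks of length at most four, and each of these is filled by backtracks, triangles
and squares. A loop at `v` visits finitely many vertices, so it lies in some interval
`[T⁻ⁿ v, Tⁿ v]`. Joining with `T⁻⁽ⁿ⁻¹⁾ v` and then meeting with `Tⁿ⁻¹ v` are such maps, fix `v`,
and move the loop into `[T⁻⁽ⁿ⁻¹⁾ v, Tⁿ⁻¹ v]`; after `n` rounds the loop is constant.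
-/

namespace SimpleGraph.Walk

variable {V V' : Type*} {G : SimpleGraph V} {G' : SimpleGraph V'}

noncomputable def ofEqOrAdj {u v : V} (h : u = v ∨ G.Adj u v) : G.Walk u v := by
  classical
  exact if hadj : G.Adj u v then cons hadj nil else nil.copy rfl (h.resolve_right hadj)

theorem length_ofEqOrAdj_le {u v : V} (h : u = v ∨ G.Adj u v) : (ofEqOrAdj h).length ≤ 1 := by
  unfold ofEqOrAdj
  split <;> simp

@[simp]
theorem ofEqOrAdj_self {u : V} (h : u = u ∨ G.Adj u u) : ofEqOrAdj h = nil := by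
  simp [ofEqOrAdj]

theorem mem_support_ofEqOrAdj {u v x : V} (h : u = v ∨ G.Adj u v)
    (hx : x ∈ (ofEqOrAdj h).support) : x = u ∨ x = v := by
  unfold ofEqOrAdj at hx
  split at hx <;> simp_all

noncomputable def mapOfEqOrAdj (f : V → V')
    (hf : ∀ ⦃u v⦄, G.Adj u v → f u = f v ∨ G'.Adj (f u) (f v)) :
    ∀ {u v : V}, G.Walk u v → G'.Walk (f u) (f v)
  | _, _, nil => nil
  | _, _, cons h p => (ofEqOrAdj (hf h)).append (p.mapOfEqOrAdj f hf)

theorem exists_mem_support_of_mem_support_mapOfEqOrAdj (f : V → V')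
    (hf : ∀ ⦃u v⦄, G.Adj u v → f u = f v ∨ G'.Adj (f u) (f v)) {u v : V} (p : G.Walk u v)
    {x : V'} (hx : x ∈ (p.mapOfEqOrAdj f hf).support) : ∃ y ∈ p.support, f y = x := by
  induction p with
  | nil => exact ⟨_, start_mem_support _, (List.mem_singleton.mp hx).symm⟩
  | cons h p ih =>
    rcases (mem_support_append_iff _ _).mp hx with hx | hx
    · rcases mem_support_ofEqOrAdj _ hx with rfl | rfl
      · exact ⟨_, start_mem_support _, rfl⟩
      · exact ⟨_, List.mem_cons_of_mem _ p.start_mem_support, rfl⟩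
    · obtain ⟨y, hy, rfl⟩ := ih hx
      exact ⟨y, List.mem_cons_of_mem _ hy, rfl⟩

theorem eq_nil_of_forall_mem_support_eq {v : V} :
    ∀ p : G.Walk v v, (∀ u ∈ p.support, u = v) → p = nil
  | nil, _ => rfl
  | cons h q, hq =>
    (G.loopless.irrefl _ ((hq _ (List.mem_cons_of_mem _ q.start_mem_support)) ▸ h)).elim

end SimpleGraph.Walk

namespace TriSqHomotopic

variable {V : Type*} {G : SimpleGraph V} {f : V → V}

theorem of_eq {u v : V} {p q : G.Walk u v} (h : p = q) : TriSqHomotopic G p q :=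
  h ▸ refl p

theorem cons {u v w : V} (h : G.Adj u v) {p q : G.Walk v w} (hpq : TriSqHomotopic G p q) :
    TriSqHomotopic G (Walk.cons h p) (Walk.cons h q) :=
  append_left (Walk.cons h Walk.nil) hpq

theorem reverse_append_self {u v : V} (p : G.Walk u v) :
    TriSqHomotopic G (p.reverse.append p) Walk.nil := by
  induction p with
  | nil => exact refl _
  | cons h p ih =>
    rw [Walk.reverse_cons, ← Walk.append_assoc]
    exact (append_left _ (append_right p (backtrack h.symm))).trans ih

theorem of_append_reverse {u v : V} {p q : G.Walk u v}
    (h : TriSqHomotopic G (p.append q.reverse) Walk.nil) : TriSqHomotopic G p q := by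
  have hq : TriSqHomotopic G p (p.append (q.reverse.append q)) := by
    simpa only [Walk.append_nil] using append_left p (reverse_append_self q).symm
  rw [Walk.append_assoc] at hq
  simpa only [Walk.nil_append] using hq.trans (append_right q h)

/-- Unless it is an induced square, the quadrilateral degenerates into two backtracks or two
triangles. -/
theorem quadrilateral {a b c d : V} (hab : G.Adj a b) (hbc : G.Adj b c) (had : G.Adj a d)
    (hdc : G.Adj d c) :
    TriSqHomotopic G (Walk.cons hab (Walk.cons hbc Walk.nil))
      (Walk.cons had (Walk.cons hdc Walk.nil)) := by
  by_cases hbd' : b = d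
  · subst hbd'
    exact refl _
  by_cases hac' : a = c
  · subst hac'
    exact (backtrack hab).trans (backtrack had).symm
  by_cases hac : G.Adj a c
  · exact (triangle hab hbc hac).trans (triangle had hdc hac).symm
  by_cases hbd : G.Adj b d
  · exact (cons hab (triangle hbd hdc hbc)).symm.trans
      (append_right (Walk.cons hdc Walk.nil) (triangle hab hbd had))
  exact square hab hbc had hdc hac hbd hac' hbd'

theorem nil_of_length_le_four {u : V} (p : G.Walk u u) (hp : p.length ≤ 4) :
    TriSqHomotopic G p Walk.nil := by
  match p, hp with
  | .nil, _ => exact refl _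
  | .cons h .nil, _ => exact (G.loopless.irrefl _ h).elim
  | .cons h (.cons _ .nil), _ => exact backtrack h
  | .cons hab (.cons hbc (.cons hca .nil)), _ =>
    exact (append_right _ (triangle hab hbc hca.symm)).trans (backtrack hca.symm)
  | .cons hab (.cons hbc (.cons hcd (.cons hda .nil))), _ =>
    exact (append_right _ (quadrilateral hab hbc hda.symm hcd.symm)).trans
      ((cons hda.symm (append_right _ (backtrack hcd.symm))).trans (backtrack hda.symm))
  | .cons _ (.cons _ (.cons _ (.cons _ (.cons _ _)))), hp =>
    simp only [Walk.length_cons] at hp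
    omega

theorem of_length_add_length_le_four {u v : V} (p q : G.Walk u v)
    (h : p.length + q.length ≤ 4) : TriSqHomotopic G p q :=
  of_append_reverse (nil_of_length_le_four _ (by
    rwa [Walk.length_append, Walk.length_reverse]))

theorem ofEqOrAdj_append_mapOfEqOrAdj
    (hf : ∀ ⦃u v⦄, G.Adj u v → f u = f v ∨ G.Adj (f u) (f v)) {u v : V} (p : G.Walk u v)
    (hp : ∀ x ∈ p.support, x = f x ∨ G.Adj x (f x)) :
    TriSqHomotopic G ((Walk.ofEqOrAdj (hp u p.start_mem_support)).append (p.mapOfEqOrAdj f hf))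
      (p.append (Walk.ofEqOrAdj (hp v p.end_mem_support))) := by
  induction p with
  | nil => exact of_eq (Walk.append_nil _)
  | cons h q ih =>
    have rung := of_length_add_length_le_four
      ((Walk.ofEqOrAdj (hp _ (Walk.start_mem_support _))).append (Walk.ofEqOrAdj (hf h)))
      (Walk.cons h (Walk.ofEqOrAdj (hp _ (List.mem_cons_of_mem _ q.start_mem_support))))
      (by simp only [Walk.length_append, Walk.length_cons]
          linarith [Walk.length_ofEqOrAdj_le (hp _ (Walk.start_mem_support _)),
            Walk.length_ofEqOrAdj_le (hf h),
            Walk.length_ofEqOrAdj_le (hp _ (List.mem_cons_of_mem _ q.start_mem_support))])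
    rw [Walk.mapOfEqOrAdj, Walk.append_assoc]
    exact (append_right _ rung).trans
      (cons h (ih fun x hx => hp x (List.mem_cons_of_mem _ hx)))

theorem exists_homotopic_image
    (hf : ∀ ⦃u v⦄, G.Adj u v → f u = f v ∨ G.Adj (f u) (f v)) {v : V} (hv : f v = v)
    (p : G.Walk v v) (hp : ∀ x ∈ p.support, x = f x ∨ G.Adj x (f x)) :
    ∃ q : G.Walk v v, TriSqHomotopic G p q ∧ ∀ x ∈ q.support, ∃ y ∈ p.support, f y = x := by
  refine ⟨(p.mapOfEqOrAdj f hf).copy hv hv, ?_, fun x hx => ?_⟩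
  · have ladder := ofEqOrAdj_append_mapOfEqOrAdj hf p hp
    -- at the fixed base point both rungs of the ladder are the empty walk
    generalize p.mapOfEqOrAdj f hf = q at ladder ⊢
    generalize hp v p.start_mem_support = h at ladder
    generalize f v = w at *
    subst hv
    simpa using ladder.symm
  · rw [Walk.support_copy] at hx
    exact Walk.exists_mem_support_of_mem_support_mapOfEqOrAdj f hf p hx

end TriSqHomotopic

section Interval

variable {α : Type*} [Preorder α] {T : α ≃o α}

theorem Icc_pow_succ (v : α) (n : ℕ) :
    Set.Icc ((T ^ (n + 1))⁻¹ v) ((T ^ (n + 1)) v) =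
      Set.Icc (T⁻¹ ((T ^ n)⁻¹ v)) (T ((T ^ n) v)) := by
  rw [show (T ^ (n + 1))⁻¹ = T⁻¹ * (T ^ n)⁻¹ by rw [pow_succ, mul_inv_rev], pow_succ']
  rfl

theorem monotone_Icc_pow (hT : ∀ x, x ≤ T x) (v : α) :
    Monotone fun n : ℕ => Set.Icc ((T ^ n)⁻¹ v) ((T ^ n) v) :=
  monotone_nat_of_le_succ fun n => by
    rw [Icc_pow_succ]
    exact Set.Icc_subset_Icc (by simpa using hT (T⁻¹ ((T ^ n)⁻¹ v))) (hT _)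

theorem mem_Icc_pow (hT : ∀ x, x ≤ T x) (v : α) (n : ℕ) :
    v ∈ Set.Icc ((T ^ n)⁻¹ v) ((T ^ n) v) :=
  monotone_Icc_pow hT v (Nat.zero_le n) (by simp)

theorem exists_forall_mem_Icc_pow (hT : ∀ x, x ≤ T x) {v : α}
    (hv : ∀ y, ∃ k : ℕ, (T ^ k)⁻¹ v ≤ y ∧ y ≤ (T ^ k) v) (s : Finset α) :
    ∃ n : ℕ, ∀ u ∈ s, u ∈ Set.Icc ((T ^ n)⁻¹ v) ((T ^ n) v) := by
  choose k hk using hv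
  obtain ⟨n, hn⟩ := (s.image k).exists_le
  exact ⟨n, fun u hu => monotone_Icc_pow hT v (hn _ (Finset.mem_image_of_mem k hu)) (hk u)⟩

end Interval

section StepGraph

variable {L : Type*} [Lattice L] {T : L ≃o L}

theorem stepGraph_eq_or_adj_of_le_of_le {x y : L} (hxy : x ≤ y) (hyx : y ≤ T x) :
    x = y ∨ (stepGraph T).Adj x y :=
  or_iff_not_imp_left.mpr fun hne => ⟨hne, Or.inl ⟨hxy, hyx⟩⟩

theorem stepGraph_map_eq_or_adj {f : L → L} (hf : Monotone f) (hfT : ∀ x, f (T x) ≤ T (f x))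
    ⦃x y : L⦄ (h : (stepGraph T).Adj x y) : f x = f y ∨ (stepGraph T).Adj (f x) (f y) := by
  rcases h with ⟨-, ⟨hxy, hyx⟩ | ⟨hyx, hxy⟩⟩
  · exact stepGraph_eq_or_adj_of_le_of_le (hf hxy) ((hf hyx).trans (hfT x))
  · rw [eq_comm, (stepGraph T).adj_comm]
    exact stepGraph_eq_or_adj_of_le_of_le (hf hyx) ((hf hxy).trans (hfT y))

theorem exists_homotopic_sup (hT : ∀ x, x ≤ T x) {a v : L} (hav : a ≤ v)
    (p : (stepGraph T).Walk v v) (hp : ∀ u ∈ p.support, T⁻¹ a ≤ u) :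
    ∃ q : (stepGraph T).Walk v v, TriSqHomotopic (stepGraph T) p q ∧
      ∀ x ∈ q.support, ∃ u ∈ p.support, u ⊔ a = x := by
  refine TriSqHomotopic.exists_homotopic_image (f := (· ⊔ a))
    (stepGraph_map_eq_or_adj (fun _ _ h => sup_le_sup_right h a) fun x => ?_)
    (sup_eq_left.mpr hav) p fun u hu => stepGraph_eq_or_adj_of_le_of_le le_sup_left
      (sup_le (hT u) (by simpa using T.monotone (hp u hu)))
  rw [map_sup]
  exact sup_le_sup_left (hT a) _

theorem exists_homotopic_inf (hT : ∀ x, x ≤ T x) {b v : L} (hvb : v ≤ b)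
    (p : (stepGraph T).Walk v v) (hp : ∀ u ∈ p.support, u ≤ T b) :
    ∃ q : (stepGraph T).Walk v v, TriSqHomotopic (stepGraph T) p q ∧
      ∀ x ∈ q.support, ∃ u ∈ p.support, u ⊓ b = x := by
  refine TriSqHomotopic.exists_homotopic_image (f := (· ⊓ b))
    (stepGraph_map_eq_or_adj (fun _ _ h => inf_le_inf_right b h) fun x => ?_)
    (inf_eq_left.mpr hvb) p fun u hu => ?_
  · rw [map_inf]
    exact inf_le_inf_left _ (hT b)
  · rw [eq_comm, (stepGraph T).adj_comm]
    refine stepGraph_eq_or_adj_of_le_of_le inf_le_left ?_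
    rw [map_inf]
    exact le_inf (hT u) (hp u hu)

theorem exists_homotopic_forall_mem_Icc (hT : ∀ x, x ≤ T x) {a b v : L} (hav : a ≤ v)
    (hvb : v ≤ b) (p : (stepGraph T).Walk v v)
    (hp : ∀ u ∈ p.support, u ∈ Set.Icc (T⁻¹ a) (T b)) :
    ∃ q : (stepGraph T).Walk v v, TriSqHomotopic (stepGraph T) p q ∧
      ∀ u ∈ q.support, u ∈ Set.Icc a b := by
  obtain ⟨q, hpq, hq⟩ := exists_homotopic_sup hT hav p fun u hu => (hp u hu).1
  obtain ⟨r, hqr, hr⟩ := exists_homotopic_inf hT hvb q fun x hx => by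
    obtain ⟨u, hu, rfl⟩ := hq x hx
    exact sup_le (hp u hu).2 (hav.trans (hvb.trans (hT b)))
  refine ⟨r, hpq.trans hqr, fun x hx => ?_⟩
  obtain ⟨y, hy, rfl⟩ := hr x hx
  obtain ⟨u, -, rfl⟩ := hq y hy
  exact ⟨le_inf le_sup_right (hav.trans hvb), inf_le_right⟩

theorem nullHomotopic_of_forall_mem_Icc_pow (hT : ∀ x, x ≤ T x) (v : L) (n : ℕ)
    (p : (stepGraph T).Walk v v)
    (hp : ∀ u ∈ p.support, u ∈ Set.Icc ((T ^ n)⁻¹ v) ((T ^ n) v)) :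
    TriSqHomotopic (stepGraph T) p Walk.nil := by
  induction n generalizing p with
  | zero =>
    refine TriSqHomotopic.of_eq (p.eq_nil_of_forall_mem_support_eq fun u hu => ?_)
    simpa using hp u hu
  | succ n ih =>
    obtain ⟨a_le, le_b⟩ := mem_Icc_pow hT v n
    obtain ⟨q, hpq, hq⟩ := exists_homotopic_forall_mem_Icc hT a_le le_b p
      fun u hu => Icc_pow_succ v n ▸ hp u hu
    exact hpq.trans (ih q hq)

end StepGraph

theorem stepGraph_simply_connected_general {L : Type*} [Lattice L] (T : L ≃o L)
    (hinc : ∀ x : L, x < T x)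
    (hcof : ∀ x y : L, ∃ k : ℕ, (T ^ (k : ℤ))⁻¹ x ≤ y ∧ y ≤ (T ^ (k : ℤ)) x)
    (v : L) (p : (stepGraph T).Walk v v) :
    TriSqHomotopic (stepGraph T) p SimpleGraph.Walk.nil := by
  classical
  have hT : ∀ x, x ≤ T x := fun x => (hinc x).le
  obtain ⟨n, hn⟩ := exists_forall_mem_Icc_pow hT
    (fun y => by simpa only [zpow_natCast] using hcof v y) p.support.toFinset
  exact nullHomotopic_of_forall_mem_Icc_pow hT v n p fun u hu =>
    hn u (List.mem_toFinset.mpr hu)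

/-- Lemma 3.6. The triangle-square complex of the graph `X` on `L` is
simply connected: every combinatorial loop is null-homotopic in the 2-complex obtained by
filling in every 3-cycle with a triangle and every induced 4-cycle with a square. -/
theorem stepGraph_simply_connected {L : Type*} [Lattice L] (T : L ≃o L)
    (hjoin : ∀ S : Set L, S.Nonempty → BddAbove S → ∃ j, IsLUB S j)
    (hinc : ∀ x : L, x < T x)
    (hcof : ∀ x y : L, ∃ k : ℕ, (T ^ (k : ℤ))⁻¹ x ≤ y ∧ y ≤ (T ^ (k : ℤ)) x)
    (v : L) (p : (stepGraph T).Walk v v) :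
    TriSqHomotopic (stepGraph T) p SimpleGraph.Walk.nil :=
  stepGraph_simply_connected_general T hinc hcof v p
end

section
/- Let L and X be as above (graph on vertex set L). Then X is a weakly modular graph. -/
/-!
Write `ρ(x, y)` for the least `k` with `y ≤ x + k`; it satisfies the triangle inequality.
Climbing from `x` to `x ⊔ y` through the vertices `(x ⊔ y) ⊓ (x + j)` shows that the graph
distance is `ρ(x, y) + ρ(y, x)`. Along an edge both `ρ(x, ·)` and `ρ(·, x)` move by at most one,
so in the triangle and in the quadrangle condition the two vertices `y`, `z` at distance `n` from
`x` either have the same profile `(ρ(x, ·), ρ(·, x))`, or `y ≤ z` and the profiles of `y` and `z`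
are `(r, s + 1)` and `(r + 1, s)`. For a common profile `(r + 1, s)` take `y ⊓ z ⊓ (x + r)`, for
a common profile `(r, s + 1)` take `y ⊔ z ⊔ (x - s)`, and in the shifted case take
`z ⊓ (y + 1) ⊓ (x + r)`: each is adjacent to `y` and `z` and has profile at most `(r, s)`.
-/
open SimpleGraph

theorem SimpleGraph.exists_common_neighbor_dist_eq_sub_one {V : Type*} {G : SimpleGraph V}
    {x y z u : V} {n : ℕ} (hdy : G.dist x y = n) (hu : G.dist x u < n)
    (hy : G.Adj u y) (hz : G.Adj u z) :
    ∃ v, G.dist x v = n - 1 ∧ G.dist v y = 1 ∧ G.dist v z = 1 := by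
  have hxy := hy.reachable.dist_triangle_right x
  rw [dist_eq_one_iff_adj.2 hy] at hxy
  exact ⟨u, by omega, dist_eq_one_iff_adj.2 hy, dist_eq_one_iff_adj.2 hz⟩

namespace OrderIso

section Preorder

variable {L : Type*} [Preorder L]

structure IsCofinalShift (T : L ≃o L) : Prop where
  le_apply : ∀ x, x ≤ T x
  exists_le_pow_apply : ∀ x y, ∃ k : ℕ, y ≤ (T ^ k) x

/-- The least `k` with `y ≤ T^k x` (junk value `0` if there is none). -/
noncomputable def rise (T : L ≃o L) (x y : L) : ℕ := sInf {k : ℕ | y ≤ (T ^ k) x}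

variable {T : L ≃o L} {x y z : L} {j k : ℕ}

theorem pow_add_apply (T : L ≃o L) (j k : ℕ) (x : L) :
    (T ^ (j + k)) x = (T ^ j) ((T ^ k) x) := by
  rw [pow_add]; rfl

theorem pow_succ_apply_s9 (T : L ≃o L) (k : ℕ) (x : L) : (T ^ (k + 1)) x = (T ^ k) (T x) := by
  rw [pow_succ]; rfl

theorem pow_succ_apply' (T : L ≃o L) (k : ℕ) (x : L) : (T ^ (k + 1)) x = T ((T ^ k) x) := by
  rw [pow_succ']; rfl

theorem rise_le_of_le_pow_apply (h : y ≤ (T ^ k) x) : T.rise x y ≤ k := Nat.sInf_le h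

theorem rise_eq_zero_of_le (h : y ≤ x) : T.rise x y = 0 :=
  Nat.le_zero.1 (rise_le_of_le_pow_apply (k := 0) h)

theorem rise_le_one_of_le_apply (h : y ≤ T x) : T.rise x y ≤ 1 :=
  rise_le_of_le_pow_apply (k := 1) (by simpa using h)

namespace IsCofinalShift

variable (hT : T.IsCofinalShift)
include hT

theorem pow_apply_mono_left (hjk : j ≤ k) (x : L) : (T ^ j) x ≤ (T ^ k) x := by
  induction k, hjk using Nat.le_induction with
  | base => exact le_rfl
  | succ k _ ih => exact ih.trans (pow_succ_apply' T k x ▸ hT.le_apply _)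

theorem le_pow_apply (k : ℕ) (x : L) : x ≤ (T ^ k) x := by
  simpa using hT.pow_apply_mono_left (Nat.zero_le k) x

theorem le_pow_rise_apply (x y : L) : y ≤ (T ^ T.rise x y) x := by
  obtain ⟨k, hk⟩ := hT.exists_le_pow_apply x y
  exact Nat.sInf_mem (s := {k : ℕ | y ≤ (T ^ k) x}) ⟨k, hk⟩

theorem rise_le_iff : T.rise x y ≤ k ↔ y ≤ (T ^ k) x :=
  ⟨fun h => (hT.le_pow_rise_apply x y).trans (hT.pow_apply_mono_left h x),
    rise_le_of_le_pow_apply⟩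

theorem rise_triangle (x y z : L) : T.rise x z ≤ T.rise x y + T.rise y z := by
  rw [hT.rise_le_iff, add_comm, pow_add_apply]
  exact (hT.le_pow_rise_apply y z).trans ((T ^ _).monotone (hT.le_pow_rise_apply x y))

theorem rise_bounds_of_le_of_le_apply (hyz : y ≤ z) (hzy : z ≤ T y) (x : L) :
    T.rise x y ≤ T.rise x z ∧ T.rise x z ≤ T.rise x y + 1 ∧
      T.rise z x ≤ T.rise y x ∧ T.rise y x ≤ T.rise z x + 1 := by
  have h₁ := hT.rise_triangle x z y
  have h₂ := hT.rise_triangle x y z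
  have h₃ := hT.rise_triangle z y x
  have h₄ := hT.rise_triangle y z x
  have h₀ : T.rise z y = 0 := rise_eq_zero_of_le hyz
  have h₁' : T.rise y z ≤ 1 := rise_le_one_of_le_apply hzy
  omega

end IsCofinalShift

end Preorder

end OrderIso

section Lattice

variable {L : Type*} [Lattice L] {T : L ≃o L} {x y z t u : L} {n r s : ℕ}

theorem stepGraph_adj_of_dist_lt (hd : (stepGraph T).dist x u < (stepGraph T).dist x y)
    (h : (u ≤ y ∧ y ≤ T u) ∨ (y ≤ u ∧ u ≤ T y)) : (stepGraph T).Adj u y :=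
  ⟨by rintro rfl; exact hd.ne rfl, h⟩

theorem OrderIso.rise_add_rise_le_one_of_adj (h : (stepGraph T).Adj x y) :
    T.rise x y + T.rise y x ≤ 1 := by
  rcases h.2 with ⟨hxy, hyx⟩ | ⟨hyx, hxy⟩
  · rw [rise_eq_zero_of_le hxy]; exact rise_le_one_of_le_apply hyx
  · rw [rise_eq_zero_of_le hyx, zero_add]; exact rise_le_one_of_le_apply hxy

namespace OrderIso.IsCofinalShift

variable (hT : T.IsCofinalShift)
include hT

theorem rise_add_rise_le_length {a b : L} (p : (stepGraph T).Walk a b) :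
    T.rise a b + T.rise b a ≤ p.length := by
  induction p with
  | nil => simp [rise_eq_zero_of_le]
  | @cons a c b h p ih =>
    have := hT.rise_triangle a c b
    have := hT.rise_triangle b c a
    have := rise_add_rise_le_one_of_adj h
    rw [Walk.length_cons]
    omega

theorem edist_le_of_le_of_le_pow_apply {k : ℕ} {w : L} (hxw : x ≤ w)
    (hw : w ≤ (T ^ k) x) :
    (stepGraph T).edist x w ≤ k := by
  induction k generalizing w with
  | zero => simp [le_antisymm (by simpa using hw) hxw]
  | succ k ih =>
    set v := w ⊓ (T ^ k) x
    have hxv : (stepGraph T).edist x v ≤ k :=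
      ih (le_inf hxw (hT.le_pow_apply k x)) inf_le_right
    have hvw : (stepGraph T).edist v w ≤ 1 := by
      refine edist_le_one_iff_adj_or_eq.2 (or_iff_not_imp_right.2 fun hne =>
        ⟨hne, .inl ⟨inf_le_left, ?_⟩⟩)
      rw [map_inf, ← pow_succ_apply']
      exact le_inf (hT.le_apply w) hw
    calc (stepGraph T).edist x w ≤ (stepGraph T).edist x v + (stepGraph T).edist v w :=
          SimpleGraph.edist_triangle
      _ ≤ k + 1 := add_le_add hxv hvw
      _ = (k + 1 : ℕ) := by push_cast; rfl

theorem edist_eq (x y : L) : (stepGraph T).edist x y = T.rise x y + T.rise y x := by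
  refine le_antisymm ?_ (le_sInf (Set.forall_mem_range.2 fun p => ?_))
  · calc (stepGraph T).edist x y
          ≤ (stepGraph T).edist x (x ⊔ y) + (stepGraph T).edist y (x ⊔ y) := by
            rw [edist_comm (u := y)]; exact SimpleGraph.edist_triangle
      _ ≤ T.rise x y + T.rise y x := add_le_add
          (hT.edist_le_of_le_of_le_pow_apply le_sup_left
            (sup_le (hT.le_pow_apply _ x) (hT.le_pow_rise_apply x y)))
          (hT.edist_le_of_le_of_le_pow_apply le_sup_right
            (sup_le (hT.le_pow_rise_apply y x) (hT.le_pow_apply _ y)))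
  · exact_mod_cast hT.rise_add_rise_le_length p

theorem dist_eq (x y : L) : (stepGraph T).dist x y = T.rise x y + T.rise y x := by
  rw [SimpleGraph.dist, hT.edist_eq]; rfl

theorem dist_le_of_le_pow_apply {r s : ℕ} (hur : u ≤ (T ^ r) x) (hus : x ≤ (T ^ s) u) :
    (stepGraph T).dist x u ≤ r + s := by
  rw [hT.dist_eq]
  exact add_le_add (rise_le_of_le_pow_apply hur) (rise_le_of_le_pow_apply hus)

theorem exists_closer_of_le_pow_apply (hdy : (stepGraph T).dist x y = n)
    (hdz : (stepGraph T).dist x z = n) (hrs : r + s < n)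
    (hur : u ≤ (T ^ r) x) (hus : x ≤ (T ^ s) u)
    (huy : (u ≤ y ∧ y ≤ T u) ∨ (y ≤ u ∧ u ≤ T y))
    (huz : (u ≤ z ∧ z ≤ T u) ∨ (z ≤ u ∧ u ≤ T z)) :
    ∃ v, (stepGraph T).dist x v = n - 1 ∧ (stepGraph T).dist v y = 1 ∧
      (stepGraph T).dist v z = 1 := by
  have hu : (stepGraph T).dist x u < n := (hT.dist_le_of_le_pow_apply hur hus).trans_lt hrs
  exact exists_common_neighbor_dist_eq_sub_one hdy hu
    (stepGraph_adj_of_dist_lt (hdy ▸ hu) huy) (stepGraph_adj_of_dist_lt (hdz ▸ hu) huz)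

theorem exists_closer_of_inf (hdy : (stepGraph T).dist x y = n)
    (hdz : (stepGraph T).dist x z = n)
    (hrs : r + s < n) (hy : y ≤ (T ^ (r + 1)) x) (hz : z ≤ (T ^ (r + 1)) x)
    (hxy : x ≤ (T ^ s) y) (hxz : x ≤ (T ^ s) z) (hyz : y ≤ T z) (hzy : z ≤ T y) :
    ∃ v, (stepGraph T).dist x v = n - 1 ∧ (stepGraph T).dist v y = 1 ∧
      (stepGraph T).dist v z = 1 := by
  have hTu : T (y ⊓ z ⊓ (T ^ r) x) = T y ⊓ T z ⊓ (T ^ (r + 1)) x := by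
    rw [map_inf, map_inf, pow_succ_apply']
  refine hT.exists_closer_of_le_pow_apply hdy hdz hrs inf_le_right ?_
    (.inl ⟨inf_le_left.trans inf_le_left, hTu ▸ le_inf (le_inf (hT.le_apply y) hyz) hy⟩)
    (.inl ⟨inf_le_left.trans inf_le_right, hTu ▸ le_inf (le_inf hzy (hT.le_apply z)) hz⟩)
  rw [map_inf, map_inf, ← pow_add_apply]
  exact le_inf (le_inf hxy hxz) (hT.le_pow_apply _ x)

theorem exists_closer_of_sup (hdy : (stepGraph T).dist x y = n)
    (hdz : (stepGraph T).dist x z = n)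
    (hrs : r + s < n) (hy : y ≤ (T ^ r) x) (hz : z ≤ (T ^ r) x)
    (hxy : x ≤ (T ^ (s + 1)) y) (hxz : x ≤ (T ^ (s + 1)) z) (hyz : y ≤ T z) (hzy : z ≤ T y) :
    ∃ v, (stepGraph T).dist x v = n - 1 ∧ (stepGraph T).dist v y = 1 ∧
      (stepGraph T).dist v z = 1 := by
  have hle_apply {w : L} (hxw : x ≤ (T ^ (s + 1)) w) : (T ^ s).symm x ≤ T w := by
    rwa [symm_apply_le, ← pow_succ_apply_s9]
  refine hT.exists_closer_of_le_pow_apply hdy hdz hrs (sup_le (sup_le hy hz) ?_)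
    ((T ^ s).symm_apply_le.1 le_sup_right)
    (.inr ⟨le_sup_left.trans le_sup_left,
      sup_le (sup_le (hT.le_apply y) hzy) (hle_apply hxy)⟩)
    (.inr ⟨le_sup_right.trans le_sup_left,
      sup_le (sup_le hyz (hT.le_apply z)) (hle_apply hxz)⟩)
  rw [symm_apply_le, ← pow_add_apply]
  exact hT.le_pow_apply _ x

theorem exists_closer_of_rise_eq_add_one (hdy : (stepGraph T).dist x y = n)
    (hdz : (stepGraph T).dist x z = n) (hr : T.rise x z = T.rise x y + 1)
    (hs : T.rise y x = T.rise z x + 1) (hyz : y ≤ z) (hzy : z ≤ T (T y)) :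
    ∃ v, (stepGraph T).dist x v = n - 1 ∧ (stepGraph T).dist v y = 1 ∧
      (stepGraph T).dist v z = 1 := by
  have hrs : T.rise x y + T.rise z x < n := by rw [← hdy, hT.dist_eq]; omega
  have hy := hT.le_pow_rise_apply x y
  have hz := hr ▸ hT.le_pow_rise_apply x z
  have hxy := hs ▸ hT.le_pow_rise_apply y x
  have hTu : T (z ⊓ T y ⊓ (T ^ T.rise x y) x) =
      T z ⊓ T (T y) ⊓ (T ^ (T.rise x y + 1)) x := by
    rw [map_inf, map_inf, pow_succ_apply']
  refine hT.exists_closer_of_le_pow_apply hdy hdz hrs inf_le_right ?_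
    (.inr ⟨le_inf (le_inf hyz (hT.le_apply y)) hy, inf_le_left.trans inf_le_right⟩)
    (.inl ⟨inf_le_left.trans inf_le_left, hTu ▸ le_inf (le_inf (hT.le_apply z) hzy) hz⟩)
  rw [map_inf, map_inf, ← pow_add_apply, ← pow_succ_apply_s9]
  exact le_inf (le_inf (hT.le_pow_rise_apply z x) hxy) (hT.le_pow_apply _ x)

theorem exists_closer_of_rise_eq (hn : 0 < n) (hdy : (stepGraph T).dist x y = n)
    (hdz : (stepGraph T).dist x z = n) (hr : T.rise x z = T.rise x y)
    (hs : T.rise z x = T.rise y x) (hyz : y ≤ T z) (hzy : z ≤ T y) :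
    ∃ v, (stepGraph T).dist x v = n - 1 ∧ (stepGraph T).dist v y = 1 ∧
      (stepGraph T).dist v z = 1 := by
  have hn' : T.rise x y + T.rise y x = n := by rw [← hdy, hT.dist_eq]
  have hy := hT.le_pow_rise_apply x y
  have hz := hr ▸ hT.le_pow_rise_apply x z
  have hxy := hT.le_pow_rise_apply y x
  have hxz := hs ▸ hT.le_pow_rise_apply z x
  by_cases hr₀ : T.rise x y = 0
  · obtain ⟨s, hs⟩ : ∃ s, T.rise y x = s + 1 := ⟨n - 1, by omega⟩
    rw [hs] at hxy hxz
    exact hT.exists_closer_of_sup hdy hdz (by omega) hy hz hxy hxz hyz hzy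
  · obtain ⟨r, hr⟩ : ∃ r, T.rise x y = r + 1 := ⟨_, (Nat.succ_pred_eq_of_ne_zero hr₀).symm⟩
    rw [hr] at hy hz
    exact hT.exists_closer_of_inf hdy hdz (by omega) hy hz hxy hxz hyz hzy

theorem triangle_of_le (hn : 0 < n) (hyz : y ≤ z) (hzy : z ≤ T y)
    (hdy : (stepGraph T).dist x y = n) (hdz : (stepGraph T).dist x z = n) :
    ∃ v, (stepGraph T).dist x v = n - 1 ∧ (stepGraph T).dist v y = 1 ∧
      (stepGraph T).dist v z = 1 := by
  have := hT.dist_eq x y ▸ hdy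
  have := hT.dist_eq x z ▸ hdz
  obtain ⟨h₁, h₂, h₃, h₄⟩ := hT.rise_bounds_of_le_of_le_apply hyz hzy x
  by_cases hshift : T.rise x z = T.rise x y + 1
  · exact hT.exists_closer_of_rise_eq_add_one hdy hdz hshift (by omega) hyz
      (hzy.trans (hT.le_apply _))
  · exact hT.exists_closer_of_rise_eq hn hdy hdz (by omega) (by omega)
      (hyz.trans (hT.le_apply z)) hzy

theorem quadrangle_of_le_of_le (hn : 0 < n) (hdy : (stepGraph T).dist x y = n)
    (hdz : (stepGraph T).dist x z = n) (hdt : (stepGraph T).dist x t = n + 1)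
    (hyt : y ≤ t) (hty : t ≤ T y) (hzt : z ≤ t) (htz : t ≤ T z) :
    ∃ v, (stepGraph T).dist x v = n - 1 ∧ (stepGraph T).dist v y = 1 ∧
      (stepGraph T).dist v z = 1 := by
  have := hT.dist_eq x y ▸ hdy
  have := hT.dist_eq x z ▸ hdz
  have := hT.dist_eq x t ▸ hdt
  have := hT.rise_bounds_of_le_of_le_apply hyt hty x
  have := hT.rise_bounds_of_le_of_le_apply hzt htz x
  exact hT.exists_closer_of_rise_eq hn hdy hdz (by omega) (by omega)
    (hyt.trans htz) (hzt.trans hty)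

theorem quadrangle_of_ge_of_ge (hn : 0 < n) (hdy : (stepGraph T).dist x y = n)
    (hdz : (stepGraph T).dist x z = n) (hdt : (stepGraph T).dist x t = n + 1)
    (hty : t ≤ y) (hyt : y ≤ T t) (htz : t ≤ z) (hzt : z ≤ T t) :
    ∃ v, (stepGraph T).dist x v = n - 1 ∧ (stepGraph T).dist v y = 1 ∧
      (stepGraph T).dist v z = 1 := by
  have := hT.dist_eq x y ▸ hdy
  have := hT.dist_eq x z ▸ hdz
  have := hT.dist_eq x t ▸ hdt
  have := hT.rise_bounds_of_le_of_le_apply hty hyt x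
  have := hT.rise_bounds_of_le_of_le_apply htz hzt x
  exact hT.exists_closer_of_rise_eq hn hdy hdz (by omega) (by omega)
    (hyt.trans (T.monotone htz)) (hzt.trans (T.monotone hty))

theorem quadrangle_of_le_of_ge (hdy : (stepGraph T).dist x y = n)
    (hdz : (stepGraph T).dist x z = n) (hdt : (stepGraph T).dist x t = n + 1)
    (hyt : y ≤ t) (hty : t ≤ T y) (htz : t ≤ z) (hzt : z ≤ T t) :
    ∃ v, (stepGraph T).dist x v = n - 1 ∧ (stepGraph T).dist v y = 1 ∧
      (stepGraph T).dist v z = 1 := by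
  have := hT.dist_eq x y ▸ hdy
  have := hT.dist_eq x z ▸ hdz
  have := hT.dist_eq x t ▸ hdt
  have := hT.rise_bounds_of_le_of_le_apply hyt hty x
  have := hT.rise_bounds_of_le_of_le_apply htz hzt x
  exact hT.exists_closer_of_rise_eq_add_one hdy hdz (by omega) (by omega) (hyt.trans htz)
    (hzt.trans (T.monotone hty))

end OrderIso.IsCofinalShift

end Lattice

theorem stepGraph_weakly_modular_general {L : Type*} [Lattice L] (T : L ≃o L)
    (hinc : ∀ x : L, x < T x)
    (hcof : ∀ x y : L, ∃ k : ℕ, (T ^ (k : ℤ))⁻¹ x ≤ y ∧ y ≤ (T ^ (k : ℤ)) x) :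
    (∀ (x : L) (n : ℕ), 2 ≤ n → ∀ y z : L, (stepGraph T).Adj y z →
        (stepGraph T).dist x y = n → (stepGraph T).dist x z = n →
        ∃ u, (stepGraph T).dist x u = n - 1 ∧
          (stepGraph T).dist u y = 1 ∧ (stepGraph T).dist u z = 1) ∧
    (∀ (x : L) (n : ℕ), 2 ≤ n → ∀ y z t : L,
        (stepGraph T).dist x y = n → (stepGraph T).dist x z = n →
        (stepGraph T).Adj y t → (stepGraph T).Adj z t → (stepGraph T).dist x t = n + 1 →
        ∃ u, (stepGraph T).dist x u = n - 1 ∧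
          (stepGraph T).dist u y = 1 ∧ (stepGraph T).dist u z = 1) := by
  have hT : T.IsCofinalShift := ⟨fun x => (hinc x).le, fun x y =>
    (hcof x y).imp fun k hk => by simpa only [zpow_natCast] using hk.2⟩
  have swap {x y z : L} {n : ℕ} : (∃ u, (stepGraph T).dist x u = n - 1 ∧
      (stepGraph T).dist u z = 1 ∧ (stepGraph T).dist u y = 1) →
      ∃ u, (stepGraph T).dist x u = n - 1 ∧
        (stepGraph T).dist u y = 1 ∧ (stepGraph T).dist u z = 1 :=
    Exists.imp fun _ ⟨h, hz, hy⟩ => ⟨h, hy, hz⟩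
  refine ⟨fun x n hn y z ⟨_, hyz⟩ hdy hdz => ?_,
    fun x n hn y z t hdy hdz ⟨_, hyt⟩ ⟨_, hzt⟩ hdt => ?_⟩
  · rcases hyz with ⟨hyz, hzy⟩ | ⟨hzy, hyz⟩
    · exact hT.triangle_of_le (by omega) hyz hzy hdy hdz
    · exact swap (hT.triangle_of_le (by omega) hzy hyz hdz hdy)
  · rcases hyt with ⟨hyt, hty⟩ | ⟨hty, hyt⟩ <;> rcases hzt with ⟨hzt, htz⟩ | ⟨htz, hzt⟩
    · exact hT.quadrangle_of_le_of_le (by omega) hdy hdz hdt hyt hty hzt htz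
    · exact hT.quadrangle_of_le_of_ge hdy hdz hdt hyt hty htz hzt
    · exact swap (hT.quadrangle_of_le_of_ge hdz hdy hdt hzt htz hty hyt)
    · exact hT.quadrangle_of_ge_of_ge (by omega) hdy hdz hdt hty hyt htz hzt

/-- Theorem 3.1. The graph `X` on `L` is weakly modular: it satisfies
the triangle condition and the quadrangle condition at every vertex, for every `n ≥ 2`. -/
theorem stepGraph_weakly_modular {L : Type*} [Lattice L] (T : L ≃o L)
    (hjoin : ∀ S : Set L, S.Nonempty → BddAbove S → ∃ j, IsLUB S j)
    (hinc : ∀ x : L, x < T x)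
    (hcof : ∀ x y : L, ∃ k : ℕ, (T ^ (k : ℤ))⁻¹ x ≤ y ∧ y ≤ (T ^ (k : ℤ)) x) :
    (∀ (x : L) (n : ℕ), 2 ≤ n → ∀ y z : L, (stepGraph T).Adj y z →
        (stepGraph T).dist x y = n → (stepGraph T).dist x z = n →
        ∃ u, (stepGraph T).dist x u = n - 1 ∧
          (stepGraph T).dist u y = 1 ∧ (stepGraph T).dist u z = 1) ∧
    (∀ (x : L) (n : ℕ), 2 ≤ n → ∀ y z t : L,
        (stepGraph T).dist x y = n → (stepGraph T).dist x z = n →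
        (stepGraph T).Adj y t → (stepGraph T).Adj z t → (stepGraph T).dist x t = n + 1 →
        ∃ u, (stepGraph T).dist x u = n - 1 ∧
          (stepGraph T).dist u y = 1 ∧ (stepGraph T).dist u z = 1) :=
  stepGraph_weakly_modular_general T hinc hcof
end

section
/- Let (P, ≤) be a weakly ordered set with an automorphism φ such that φ(x) > x for all x ∈ P. Suppose φ generates ≤ (every pair a ≤ b is contained in a chain of the sub-relation ≤_φ). If x ≤ a for some x, a ∈ P, then a ≤ φ(x); dually, if a ≤ x then φ⁻¹(x) ≤ a. -/
/-- `TransitiveTriple r a b c` : `(a, b, c)` is a transitive triple for `r`. -/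
def TransitiveTriple {P : Type*} (r : P → P → Prop) (a b c : P) : Prop :=
  r a b ∧ r b c ∧ r a c

lemma weakOrder_interval_bounds_aux {P : Type*} (r : P → P → Prop) (φ : P ≃ P)
    (hstar : ∀ a b c d, r a b → r b c → r c d →
      ((TransitiveTriple r b c d ∧ TransitiveTriple r a b d) ↔
        (TransitiveTriple r a b c ∧ TransitiveTriple r a c d)))
    (hφ : ∀ a b, r a b ↔ r (φ a) (φ b))
    (hinc : ∀ a, r a (φ a))
    (hgen : ∀ a b, r a b → ∃ x, r x a ∧ r a (φ x) ∧ r x b ∧ r b (φ x)) :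
    ∀ x a, r x a → r a (φ x) := by
  intro x a hxa
  obtain ⟨y, hyx, hxφy, hya, haφy⟩ := hgen x a hxa
  have hφyφx : r (φ y) (φ x) := (hφ y x).mp hyx
  have := (hstar x a (φ y) (φ x) hxa haφy hφyφx).mpr
    ⟨⟨hxa, haφy, hxφy⟩, ⟨hxφy, hφyφx, hinc x⟩⟩
  exact this.2.2.1

/-- Let `(P, ≤)` be a weakly ordered set (reflexive, antisymmetric,
condition (*)) with an automorphism `φ` such that `φ(x) > x` for all `x`, and suppose
`φ` generates `≤`: every pair `a ≤ b` is contained in an interval `[x, φ(x)]`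
(i.e. we may assume `≤ = ≤_φ`). Then `x ≤ a` implies `a ≤ φ(x)`, and dually `a ≤ x`
implies `φ⁻¹(x) ≤ a`. -/
theorem weakOrder_interval_bounds {P : Type*} (r : P → P → Prop) (φ : P ≃ P)
    (hrefl : ∀ a, r a a)
    (hanti : ∀ a b, r a b → r b a → a = b)
    (hstar : ∀ a b c d, r a b → r b c → r c d →
      ((TransitiveTriple r b c d ∧ TransitiveTriple r a b d) ↔
        (TransitiveTriple r a b c ∧ TransitiveTriple r a c d)))
    (hφ : ∀ a b, r a b ↔ r (φ a) (φ b))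
    (hinc : ∀ a, r a (φ a) ∧ a ≠ φ a)
    (hgen : ∀ a b, r a b → ∃ x, r x a ∧ r a (φ x) ∧ r x b ∧ r b (φ x)) :
    (∀ x a, r x a → r a (φ x)) ∧ (∀ x a, r a x → r (φ.symm x) a) := by
  constructor
  · exact weakOrder_interval_bounds_aux r φ hstar hφ (fun a => (hinc a).1) hgen
  · intro x a hax
    have := weakOrder_interval_bounds_aux (fun a b => r b a) φ.symm
      (fun a b c d hba hcb hdc => by
        have h := hstar d c b a hdc hcb hba
        constructor
        · rintro ⟨⟨h1, h2, h3⟩, ⟨h4, h5, h6⟩⟩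
          obtain ⟨⟨g1, g2, g3⟩, ⟨g4, g5, g6⟩⟩ := h.mpr ⟨⟨h2, h1, h3⟩, ⟨h5, h4, h6⟩⟩
          exact ⟨⟨g2, g1, g3⟩, ⟨g5, g4, g6⟩⟩
        · rintro ⟨⟨h1, h2, h3⟩, ⟨h4, h5, h6⟩⟩
          obtain ⟨⟨g1, g2, g3⟩, ⟨g4, g5, g6⟩⟩ := h.mp ⟨⟨h2, h1, h3⟩, ⟨h5, h4, h6⟩⟩
          exact ⟨⟨g2, g1, g3⟩, ⟨g5, g4, g6⟩⟩)
      (fun a b => by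
        have := (hφ (φ.symm b) (φ.symm a)).symm
        simpa using this)
      (fun a => by
        have := (hinc (φ.symm a)).1
        simpa using this)
      (fun a b hba => by
        obtain ⟨y, hyb, hbφy, hya, haφy⟩ := hgen b a hba
        exact ⟨φ y, haφy, by simpa using hya, hbφy, by simpa using hyb⟩)
      x a hax
    exact this
end

section
/- Let L be a homogeneous lattice (there is a length function ℓ on comparable pairs with ℓ(a ≤ c) = ℓ(a ≤ b) + ℓ(b ≤ c) for a ≤ b ≤ c, and ℓ(a ≤ b) = 0 iff a = b, with values in the non-negative integers). Then every nonempty upper bounded subset of L has a join, and every nonempty lower bounded subset has a meet. -/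
theorem homogeneous_lattice_aux {L : Type*} [Lattice L]
    (l : ∀ a b : L, a ≤ b → ℕ)
    (hadd : ∀ (a b c : L) (hab : a ≤ b) (hbc : b ≤ c),
      l a c (hab.trans hbc) = l a b hab + l b c hbc)
    (hzero : ∀ (a b : L) (hab : a ≤ b), l a b hab = 0 ↔ a = b) :
    ∀ S : Set L, S.Nonempty → BddAbove S → ∃ j, IsLUB S j := by
  rintro S ⟨a, haS⟩ ⟨u, hu⟩
  have hau : a ≤ u := hu haS
  set N : Set ℕ := {n | ∃ x, ∃ h1 : a ≤ x, (∀ b ∈ upperBounds S, x ≤ b) ∧ l a x h1 = n} with hN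
  have hN0 : N.Nonempty := ⟨0, a, le_refl a, fun b hb => hb haS, (hzero a a (le_refl a)).2 rfl⟩
  have hNbdd : BddAbove N := by
    refine ⟨l a u hau, ?_⟩
    rintro n ⟨x, h1, hP, rfl⟩
    have hxu : x ≤ u := hP u hu
    have := hadd a x u h1 hxu
    omega
  have hmem : sSup N ∈ N := Nat.sSup_mem hN0 hNbdd
  obtain ⟨x, h1, hP, hl⟩ := hmem
  refine ⟨x, ?_, fun b hb => hP b hb⟩
  intro s hs
  have hx' : a ≤ x ⊔ s := h1.trans le_sup_left
  have hPsup : ∀ b ∈ upperBounds S, x ⊔ s ≤ b := fun b hb => sup_le (hP b hb) (hb hs)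
  have hmem' : l a (x ⊔ s) hx' ∈ N := ⟨x ⊔ s, hx', hPsup, rfl⟩
  have hle : l a (x ⊔ s) hx' ≤ sSup N := le_csSup hNbdd hmem'
  have heq := hadd a x (x ⊔ s) h1 le_sup_left
  have h0 : l x (x ⊔ s) le_sup_left = 0 := by omega
  have hxx : x = x ⊔ s := (hzero x (x ⊔ s) le_sup_left).1 h0
  calc s ≤ x ⊔ s := le_sup_right
    _ = x := hxx.symm

/-- Let `L` be a homogeneous lattice: a lattice equipped with a length
function `l` on comparable pairs, with values in `ℕ`, such that
`l (a ≤ c) = l (a ≤ b) + l (b ≤ c)` whenever `a ≤ b ≤ c`, and `l (a ≤ b) = 0` iff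
`a = b`. Then every nonempty upper bounded subset of `L` has a join, and every nonempty
lower bounded subset of `L` has a meet. -/
theorem homogeneous_lattice_bdd_joins {L : Type*} [Lattice L]
    (l : ∀ a b : L, a ≤ b → ℕ)
    (hadd : ∀ (a b c : L) (hab : a ≤ b) (hbc : b ≤ c),
      l a c (hab.trans hbc) = l a b hab + l b c hbc)
    (hzero : ∀ (a b : L) (hab : a ≤ b), l a b hab = 0 ↔ a = b) :
    (∀ S : Set L, S.Nonempty → BddAbove S → ∃ j, IsLUB S j) ∧
    (∀ S : Set L, S.Nonempty → BddBelow S → ∃ m, IsGLB S m) := by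
  constructor
  · exact homogeneous_lattice_aux l hadd hzero
  · intro S hS hbdd
    obtain ⟨j, hj⟩ := homogeneous_lattice_aux (L := Lᵒᵈ)
      (fun a b h => l (OrderDual.ofDual b) (OrderDual.ofDual a) h)
      (fun a b c hab hbc => by
        rw [add_comm]; exact hadd (OrderDual.ofDual c) (OrderDual.ofDual b) (OrderDual.ofDual a) hbc hab)
      (fun a b hab => by
        rw [hzero (OrderDual.ofDual b) (OrderDual.ofDual a) hab]
        exact ⟨fun h => h.symm, fun h => h.symm⟩)
      (OrderDual.ofDual ⁻¹' S) (by obtain ⟨a, ha⟩ := hS; exact ⟨OrderDual.toDual a, ha⟩) hbdd.dual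
    exact ⟨OrderDual.ofDual j, hj.dual⟩
end

section
/- Let (L, φ) be a Garside lattice, i.e., L is a homogeneous lattice and φ an increasing automorphism of L such that for all x, y ∈ L there exists k ∈ ℕ with x ≤ φᵏ(y). Define the category C' with objects the elements of L and a unique morphism from x to y whenever x ≤ y, the automorphism φ' induced by φ, and Δ'(x) the morphism x ≤ φ(x). Then (C', φ', Δ') is a homogeneous categorical Garside structure; in particular, for each x ∈ L, C'_{x→} ≅ L_{≥x} and C'_{→x} ≅ L_{≤x} are lattices. -/
open CategoryTheory

/-- The prefix order on the morphisms of `C` with source `x` :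
`f ≼ g` iff `g = f ≫ h` for some morphism `h` of `C`. -/
def CatPrefLe {C : Type*} [Category C] {x : C} (a b : Σ y : C, x ⟶ y) : Prop :=
  ∃ h : a.1 ⟶ b.1, b.2 = a.2 ≫ h

/-- The suffix order on the morphisms of `C` with target `x` :
`f ≽ g` iff `f = h ≫ g` for some morphism `h` of `C`. -/
def CatSufLe {C : Type*} [Category C] {x : C} (a b : Σ y : C, y ⟶ x) : Prop :=
  ∃ h : a.1 ⟶ b.1, a.2 = h ≫ b.2

/-- A homogeneous categorical Garside structure `(C, φ, Δ)` in the sense of Bessis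
(Definition 4.1): `φ` is an automorphism of `C`, `Δ : id ⟹ φ` a natural transformation,
`C` is homogeneous and cancellative, all atoms of `C` are simple, and for each object `x`
the posets `(C_{x→}, ≼)` and `(C_{→x}, ≽)` are lattices. -/
structure IsGarsideStructure {C : Type*} [Category C] (φ : C ⥤ C) (Δ : 𝟭 C ⟶ φ) : Prop where
  /-- `φ` is an automorphism: bijective on objects -/
  obj_bij : Function.Bijective φ.obj
  /-- `φ` is an automorphism: bijective on morphisms -/
  map_bij : ∀ x y : C, Function.Bijective fun f : x ⟶ y => φ.map f
  /-- `C` is cancellative -/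
  cancel : ∀ {w x y z : C} (a : w ⟶ x) (f g : x ⟶ y) (b : y ⟶ z),
    a ≫ f ≫ b = a ≫ g ≫ b → f = g
  /-- `C` is homogeneous: an additive length function vanishing exactly on units -/
  homogeneous : ∃ l : ∀ {x y : C}, (x ⟶ y) → ℕ,
    (∀ {x y z : C} (f : x ⟶ y) (g : y ⟶ z), l (f ≫ g) = l f + l g) ∧
    (∀ {x y : C} (f : x ⟶ y), l f = 0 ↔ IsIso f)
  /-- all atoms of `C` are simple -/
  atoms_simple : ∀ {x y : C} (f : x ⟶ y), ¬ IsIso f →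
    (∀ (z : C) (g : x ⟶ z) (h : z ⟶ y), g ≫ h = f → IsIso g ∨ IsIso h) →
    ∃ g : y ⟶ φ.obj x, f ≫ g = Δ.app x
  /-- for every object `x`, `(C_{x→}, ≼)` is a lattice -/
  lattice_from : ∀ (x : C) (a b : Σ y : C, x ⟶ y),
    (∃ m, CatPrefLe m a ∧ CatPrefLe m b ∧
      ∀ t, CatPrefLe t a → CatPrefLe t b → CatPrefLe t m) ∧
    (∃ j, CatPrefLe a j ∧ CatPrefLe b j ∧
      ∀ t, CatPrefLe a t → CatPrefLe b t → CatPrefLe j t)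
  /-- for every object `x`, `(C_{→x}, ≽)` is a lattice -/
  lattice_to : ∀ (x : C) (a b : Σ y : C, y ⟶ x),
    (∃ m, CatSufLe m a ∧ CatSufLe m b ∧
      ∀ t, CatSufLe t a → CatSufLe t b → CatSufLe t m) ∧
    (∃ j, CatSufLe a j ∧ CatSufLe b j ∧
      ∀ t, CatSufLe a t → CatSufLe b t → CatSufLe j t)

/-- The natural transformation `Δ'` of the categorical Garside structure associated with
a Garside lattice `(L, φ)` : its component at `x` is the morphism `x ⟶ φ(x)`. -/
def garsideDelta {L : Type*} [Lattice L] (φ : L ≃o L) (hφ : ∀ x : L, x < φ x) :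
    𝟭 L ⟶ φ.monotone.functor where
  app x := homOfLE (hφ x).le
  naturality := by intros; apply Subsingleton.elim


private lemma posetIsoIffEq {L : Type*} [PartialOrder L] {x y : L} (f : x ⟶ y) :
    IsIso f ↔ x = y := by
  constructor
  · intro h
    exact le_antisymm (leOfHom f) (leOfHom (inv f))
  · rintro rfl
    have : f = 𝟙 x := Subsingleton.elim _ _
    rw [this]; infer_instance

private lemma le_iterate {L : Type*} [Preorder L] (φ : L → L) (hφ : ∀ x, x ≤ φ x)
    (k : ℕ) (x : L) : x ≤ φ^[k] x := by
  induction k with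
  | zero => simp
  | succ n ih => rw [Function.iterate_succ_apply']; exact ih.trans (hφ _)

/-- from Theorem 4.7. Let `(L, φ)` be a Garside lattice: `L` is a
homogeneous lattice and `φ` an increasing automorphism such that for all `x, y` there is
`k` with `x ≤ φᵏ(y)`. Let `C'` be the category with objects the elements of `L` and a
unique morphism `x ⟶ y` whenever `x ≤ y` (the preorder category of `L`), with the induced
automorphism `φ'` and `Δ'(x) : x ⟶ φ(x)`. Then `(C', φ', Δ')` is a homogeneous
categorical Garside structure; in particular, for each `x ∈ L`, `C'_{x→} ≅ L_{≥x}` and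
`C'_{→x} ≅ L_{≤x}` are lattices. -/
theorem garside_structure_of_garside_lattice {L : Type*} [Lattice L]
    (l : ∀ a b : L, a ≤ b → ℕ)
    (hadd : ∀ (a b c : L) (hab : a ≤ b) (hbc : b ≤ c),
      l a c (hab.trans hbc) = l a b hab + l b c hbc)
    (hzero : ∀ (a b : L) (hab : a ≤ b), l a b hab = 0 ↔ a = b)
    (φ : L ≃o L) (hφ : ∀ x : L, x < φ x)
    (hcof : ∀ x y : L, ∃ k : ℕ, x ≤ φ^[k] y) :
    IsGarsideStructure φ.monotone.functor (garsideDelta φ hφ) ∧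
    (∀ x : L, (∀ a b : {y : L // x ≤ y}, ∃ m : {y : L // x ≤ y},
        (m.1 ≤ a.1 ∧ m.1 ≤ b.1 ∧ ∀ t : {y : L // x ≤ y}, t.1 ≤ a.1 → t.1 ≤ b.1 → t.1 ≤ m.1)) ∧
      (∀ a b : {y : L // x ≤ y}, ∃ j : {y : L // x ≤ y},
        a.1 ≤ j.1 ∧ b.1 ≤ j.1 ∧ ∀ t : {y : L // x ≤ y}, a.1 ≤ t.1 → b.1 ≤ t.1 → j.1 ≤ t.1)) ∧
    (∀ x : L, (∀ a b : {y : L // y ≤ x}, ∃ m : {y : L // y ≤ x},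
        (m.1 ≤ a.1 ∧ m.1 ≤ b.1 ∧ ∀ t : {y : L // y ≤ x}, t.1 ≤ a.1 → t.1 ≤ b.1 → t.1 ≤ m.1)) ∧
      (∀ a b : {y : L // y ≤ x}, ∃ j : {y : L // y ≤ x},
        a.1 ≤ j.1 ∧ b.1 ≤ j.1 ∧ ∀ t : {y : L // y ≤ x}, a.1 ≤ t.1 → b.1 ≤ t.1 → j.1 ≤ t.1)) := by
  refine ⟨?_, ?_, ?_⟩
  · constructor
    · exact φ.toEquiv.bijective
    · intro x y
      constructor
      · intro f g _; exact Subsingleton.elim f g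
      · intro g
        exact ⟨homOfLE (φ.le_iff_le.mp (leOfHom g)), Subsingleton.elim _ _⟩
    · intro w x y z a f g b _; exact Subsingleton.elim f g
    · refine ⟨fun {x y} f => l x y (leOfHom f), ?_, ?_⟩
      · intro x y z f g; exact hadd x y z (leOfHom f) (leOfHom g)
      · intro x y f
        rw [hzero x y (leOfHom f)]
        exact (posetIsoIffEq f).symm
    · intro x y f hni hatom
      have hxy : x < y := lt_of_le_of_ne (leOfHom f) (fun h => hni ((posetIsoIffEq f).mpr h))
      have key : y ≤ φ x := by
        classical
        obtain ⟨k, hk⟩ := hcof y x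
        have hex : ∃ k, y ≤ φ^[k] x := ⟨k, hk⟩
        set k0 := Nat.find hex with hk0
        have hyk0 : y ≤ φ^[k0] x := Nat.find_spec hex
        have hk0pos : 0 < k0 := by
          rcases Nat.eq_zero_or_pos k0 with h0 | h0
          · exfalso; rw [h0] at hyk0; simp at hyk0; exact absurd hyk0 hxy.not_ge
          · exact h0
        have hinv : φ.symm y ≤ φ^[k0-1] x := by
          have h := hyk0
          rw [show k0 = (k0-1)+1 by omega, Function.iterate_succ_apply'] at h
          calc φ.symm y ≤ φ.symm (φ (φ^[k0-1] x)) := φ.symm.monotone h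
            _ = φ^[k0-1] x := φ.symm_apply_apply _
        have hsymlt : φ.symm y < y := by
          have h := hφ (φ.symm y); rwa [φ.apply_symm_apply] at h
        have hwle : x ⊔ φ.symm y ≤ y := sup_le hxy.le hsymlt.le
        have hd := hatom (x ⊔ φ.symm y) (homOfLE le_sup_left) (homOfLE hwle)
          (Subsingleton.elim _ _)
        rcases hd with hg | hh
        · have hex2 : x = x ⊔ φ.symm y := (posetIsoIffEq _).mp hg
          have h3 : φ.symm y ≤ x := le_sup_right.trans hex2.symm.le
          calc y = φ (φ.symm y) := (φ.apply_symm_apply y).symm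
            _ ≤ φ x := φ.monotone h3
        · have hex2 : x ⊔ φ.symm y = y := (posetIsoIffEq _).mp hh
          have hyk1 : y ≤ φ^[k0-1] x := by
            rw [← hex2]
            exact sup_le (le_iterate φ (fun z => (hφ z).le) (k0-1) x) hinv
          exact absurd hyk1 (Nat.find_min hex (show k0 - 1 < k0 by omega))
      exact ⟨homOfLE key, Subsingleton.elim _ _⟩
    · intro x a b
      constructor
      · refine ⟨⟨a.1 ⊓ b.1, homOfLE (le_inf (leOfHom a.2) (leOfHom b.2))⟩,
          ⟨homOfLE inf_le_left, Subsingleton.elim _ _⟩,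
          ⟨homOfLE inf_le_right, Subsingleton.elim _ _⟩, ?_⟩
        rintro t ⟨h1, -⟩ ⟨h2, -⟩
        exact ⟨homOfLE (le_inf (leOfHom h1) (leOfHom h2)), Subsingleton.elim _ _⟩
      · refine ⟨⟨a.1 ⊔ b.1, a.2 ≫ homOfLE le_sup_left⟩,
          ⟨homOfLE le_sup_left, Subsingleton.elim _ _⟩,
          ⟨homOfLE le_sup_right, Subsingleton.elim _ _⟩, ?_⟩
        rintro t ⟨h1, -⟩ ⟨h2, -⟩
        exact ⟨homOfLE (sup_le (leOfHom h1) (leOfHom h2)), Subsingleton.elim _ _⟩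
    · intro x a b
      constructor
      · refine ⟨⟨a.1 ⊓ b.1, homOfLE (inf_le_left.trans (leOfHom a.2))⟩,
          ⟨homOfLE inf_le_left, Subsingleton.elim _ _⟩,
          ⟨homOfLE inf_le_right, Subsingleton.elim _ _⟩, ?_⟩
        rintro t ⟨h1, -⟩ ⟨h2, -⟩
        exact ⟨homOfLE (le_inf (leOfHom h1) (leOfHom h2)), Subsingleton.elim _ _⟩
      · refine ⟨⟨a.1 ⊔ b.1, homOfLE (sup_le (leOfHom a.2) (leOfHom b.2))⟩,
          ⟨homOfLE le_sup_left, Subsingleton.elim _ _⟩,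
          ⟨homOfLE le_sup_right, Subsingleton.elim _ _⟩, ?_⟩
        rintro t ⟨h1, -⟩ ⟨h2, -⟩
        exact ⟨homOfLE (sup_le (leOfHom h1) (leOfHom h2)), Subsingleton.elim _ _⟩
  · intro x
    constructor
    · intro a b
      exact ⟨⟨a.1 ⊓ b.1, le_inf a.2 b.2⟩, inf_le_left, inf_le_right,
        fun t h1 h2 => le_inf h1 h2⟩
    · intro a b
      exact ⟨⟨a.1 ⊔ b.1, a.2.trans le_sup_left⟩, le_sup_left, le_sup_right,
        fun t h1 h2 => sup_le h1 h2⟩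
  · intro x
    constructor
    · intro a b
      exact ⟨⟨a.1 ⊓ b.1, inf_le_left.trans a.2⟩, inf_le_left, inf_le_right,
        fun t h1 h2 => le_inf h1 h2⟩
    · intro a b
      exact ⟨⟨a.1 ⊔ b.1, sup_le a.2 b.2⟩, le_sup_left, le_sup_right,
        fun t h1 h2 => sup_le h1 h2⟩
end

section
/- Let (X, φ) be a Garside flag complex. Then the binary relation < on the vertex set of X (x < y iff x and y are adjacent and x precedes y in the order of the edge) defines a weakly ordered set, i.e., it is reflexive (after adding equalities), antisymmetric, and satisfies the associativity condition (*): for any vertices a, b, c, d with a ≤ b, b ≤ c, c ≤ d, the triples (b,c,d) and (a,b,d) are transitive iff the triples (a,b,c) and (a,c,d) are transitive. -/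
open SimpleGraph

/-- Homotopy of walks in a flag simplicial complex with 1-skeleton `G` (triangles are
the embedded 3-cycles): the equivalence relation on walks (with fixed endpoints)
generated by removing backtracks and sliding across filled triangles. Simple
connectedness of the flag complex amounts to every closed walk being homotopic to the
constant walk. -/
inductive TriHomotopic {V : Type*} (G : SimpleGraph V) :
    ∀ {u v : V}, G.Walk u v → G.Walk u v → Prop
  | refl {u v : V} (p : G.Walk u v) : TriHomotopic G p p
  | symm {u v : V} {p q : G.Walk u v} : TriHomotopic G p q → TriHomotopic G q p
  | trans {u v : V} {p q r : G.Walk u v} :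
      TriHomotopic G p q → TriHomotopic G q r → TriHomotopic G p r
  | append_left {u v w : V} (p : G.Walk u v) {q r : G.Walk v w} :
      TriHomotopic G q r → TriHomotopic G (p.append q) (p.append r)
  | append_right {u v w : V} {p q : G.Walk u v} (r : G.Walk v w) :
      TriHomotopic G p q → TriHomotopic G (p.append r) (q.append r)
  | backtrack {u v : V} (h : G.Adj u v) :
      TriHomotopic G (Walk.cons h (Walk.cons h.symm Walk.nil)) Walk.nil
  | triangle {a b c : V} (hab : G.Adj a b) (hbc : G.Adj b c) (hac : G.Adj a c) :
      TriHomotopic G (Walk.cons hab (Walk.cons hbc Walk.nil)) (Walk.cons hac Walk.nil)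

/-- from the proof of Theorem 4.7. Let `(X, φ)` be a Garside flag
complex: a simply connected flag simplicial complex (encoded by its 1-skeleton `G`, flag)
with a consistent total order (encoded by the relation `lt` on adjacent vertices), an
edge labeling `lab` with values in `ℤ_{>0}`, and an order- and label-preserving
automorphism `φ`, satisfying: (1) `lab a c = lab a b + lab b c` on every 2-simplex
`a < b < c`; (2) `a ≤ b` iff `b ≤ φ(a)`; (3) every interval `[x, φ(x)]` is a lattice.
Then the relation `≤` (the reflexive closure of `lt`) makes the vertex set a weakly
ordered set: it is reflexive, antisymmetric, and satisfies the associativity condition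
(*) : for `a ≤ b`, `b ≤ c`, `c ≤ d`, the triples `(b,c,d)` and `(a,b,d)` are transitive
iff the triples `(a,b,c)` and `(a,c,d)` are transitive. -/
theorem garside_flag_complex_weak_order {V : Type*} (G : SimpleGraph V)
    (lt : V → V → Prop) (lab : V → V → ℕ) (φ : V ≃ V)
    -- `lt` is the order on the edges of the complex
    (hadj : ∀ a b, lt a b → G.Adj a b)
    (htotal : ∀ a b, G.Adj a b → lt a b ∨ lt b a)
    (hasymm : ∀ a b, lt a b → ¬ lt b a)
    -- consistency of the total orders on the simplices (flag complex)
    (hcons : ∀ a b c, lt a b → lt b c → G.Adj a c → lt a c)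
    -- the labeling is positive on edges and symmetric
    (hpos : ∀ a b, G.Adj a b → 0 < lab a b)
    (hsymlab : ∀ a b, lab a b = lab b a)
    -- condition (1) : additivity of the labels on 2-simplices `a < b < c`
    (hlab : ∀ a b c, lt a b → lt b c → lt a c → lab a c = lab a b + lab b c)
    -- `φ` is an order- and label-preserving automorphism
    (hφlt : ∀ a b, lt a b ↔ lt (φ a) (φ b))
    (hφlab : ∀ a b, lab (φ a) (φ b) = lab a b)
    -- condition (2) : `a ≤ b` iff `b ≤ φ(a)`
    (hdual : ∀ a b, (a = b ∨ lt a b) ↔ (b = φ a ∨ lt b (φ a)))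
    -- condition (3) : every interval `[x, φ(x)]` is a lattice
    (hint : ∀ x : V,
      (∀ a b c, ((x = a ∨ lt x a) ∧ (a = φ x ∨ lt a (φ x))) →
        ((x = b ∨ lt x b) ∧ (b = φ x ∨ lt b (φ x))) →
        ((x = c ∨ lt x c) ∧ (c = φ x ∨ lt c (φ x))) →
        (a = b ∨ lt a b) → (b = c ∨ lt b c) → (a = c ∨ lt a c)) ∧
      (∀ a b, ((x = a ∨ lt x a) ∧ (a = φ x ∨ lt a (φ x))) →
        ((x = b ∨ lt x b) ∧ (b = φ x ∨ lt b (φ x))) →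
        (∃ m, ((x = m ∨ lt x m) ∧ (m = φ x ∨ lt m (φ x))) ∧
          (m = a ∨ lt m a) ∧ (m = b ∨ lt m b) ∧
          ∀ t, ((x = t ∨ lt x t) ∧ (t = φ x ∨ lt t (φ x))) →
            (t = a ∨ lt t a) → (t = b ∨ lt t b) → (t = m ∨ lt t m)) ∧
        (∃ j, ((x = j ∨ lt x j) ∧ (j = φ x ∨ lt j (φ x))) ∧
          (a = j ∨ lt a j) ∧ (b = j ∨ lt b j) ∧
          ∀ t, ((x = t ∨ lt x t) ∧ (t = φ x ∨ lt t (φ x))) →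
            (a = t ∨ lt a t) → (b = t ∨ lt b t) → (j = t ∨ lt j t))))
    -- `X` is simply connected
    (hsc : ∀ (v : V) (p : G.Walk v v), TriHomotopic G p Walk.nil) :
    -- the relation `≤` is a weak order: reflexive, antisymmetric, condition (*)
    (∀ a : V, a = a ∨ lt a a) ∧
    (∀ a b : V, (a = b ∨ lt a b) → (b = a ∨ lt b a) → a = b) ∧
    (∀ a b c d : V, (a = b ∨ lt a b) → (b = c ∨ lt b c) → (c = d ∨ lt c d) →
      ((((b = c ∨ lt b c) ∧ (c = d ∨ lt c d) ∧ (b = d ∨ lt b d)) ∧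
        ((a = b ∨ lt a b) ∧ (b = d ∨ lt b d) ∧ (a = d ∨ lt a d))) ↔
       (((a = b ∨ lt a b) ∧ (b = c ∨ lt b c) ∧ (a = c ∨ lt a c)) ∧
        ((a = c ∨ lt a c) ∧ (c = d ∨ lt c d) ∧ (a = d ∨ lt a d))))) := by
  refine ⟨fun a => Or.inl rfl, ?_, ?_⟩
  · rintro a b (rfl | h) hb
    · rfl
    · rcases hb with rfl | h'
      · rfl
      · exact absurd h' (hasymm a b h)
  · intro a b c d hab hbc hcd
    constructor
    · rintro ⟨⟨_, _, hbd⟩, ⟨_, _, had⟩⟩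
      have hac : a = c ∨ lt a c := by
        have h1 := (hint b).1
        have hcφb : c = φ b ∨ lt c (φ b) := (hdual b c).mp hbc
        have hdφb : d = φ b ∨ lt d (φ b) := (hdual b d).mp hbd
        have hdφa : d = φ a ∨ lt d (φ a) := (hdual a d).mp had
        have hbφa : b = φ a ∨ lt b (φ a) := (hdual a b).mp hab
        have hφaφb : φ a = φ b ∨ lt (φ a) (φ b) := by
          rcases hab with rfl | h
          · exact Or.inl rfl
          · exact Or.inr ((hφlt a b).mp h)
        have hcφa : c = φ a ∨ lt c (φ a) :=
          h1 c d (φ a) ⟨hbc, hcφb⟩ ⟨hbd, hdφb⟩ ⟨hbφa, hφaφb⟩ hcd hdφa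
        exact (hdual a c).mpr hcφa
      exact ⟨⟨hab, hbc, hac⟩, hac, hcd, had⟩
    · rintro ⟨⟨_, _, hac⟩, ⟨_, _, had⟩⟩
      have hbd : b = d ∨ lt b d :=
        (hint a).1 b c d ⟨hab, (hdual a b).mp hab⟩ ⟨hac, (hdual a c).mp hac⟩
          ⟨had, (hdual a d).mp had⟩ hbc hcd
      exact ⟨⟨hbc, hcd, hbd⟩, hab, hbd, had⟩
end
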